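/- arXiv:1409.8169 — 5 statements merged into one kernel-verified Lean document; each statement's English description precedes it below -/
import Mathlib

section
/- Let p > 2, a > p, and let (f∘T^j)_{j≥0} be a strictly stationary centered sequence such that Q_f(u) ≤ C u^{-1/a} for all u ∈ (0,1) and some constant C > 0. If the strong mixing coefficients satisfy α(k) = o(k^{-a(p-1)/(a-p)}) as k → ∞, then lim_{t→∞} t^{p-1} ∫_0^1 Q_f(u) 1{ α^{-1}(u) Q_f(u) > t } du = 0. -/
open MeasureTheory Filter Set
open scoped ENNReal NNReal

noncomputable section

namespace Stmt5

variable {Ω : Type} [mΩ : MeasurableSpace Ω]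

/-- Quantile function `Q_f(u) = inf{t : μ{|f| > t} ≤ u}` of `|f|`. -/
def Qf (μ : Measure Ω) (f : Ω → ℝ) (u : ℝ) : ℝ :=
  sInf {t : ℝ | 0 ≤ t ∧ μ {x | t < |f x|} ≤ ENNReal.ofReal u}

/-- σ-algebra generated by `f ∘ T^k`, `k ≤ p`. -/
def pastσ (f : Ω → ℝ) (T : Ω → Ω) (p : ℕ) : MeasurableSpace Ω :=
  ⨆ (k : ℕ) (_ : k ≤ p), MeasurableSpace.comap (fun x => f (T^[k] x)) inferInstance

/-- σ-algebra generated by `f ∘ T^k`, `k ≥ q`. -/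
def futureσ (f : Ω → ℝ) (T : Ω → Ω) (q : ℕ) : MeasurableSpace Ω :=
  ⨆ (k : ℕ) (_ : q ≤ k), MeasurableSpace.comap (fun x => f (T^[k] x)) inferInstance

/-- Strong (Rosenblatt) mixing coefficients of the sequence `(f ∘ T^j)_j`. -/
def alphaMix (μ : Measure Ω) (f : Ω → ℝ) (T : Ω → Ω) (n : ℕ) : ℝ :=
  sSup {r : ℝ | ∃ (p : ℕ) (A B : Set Ω), MeasurableSet[pastσ f T p] A ∧
    MeasurableSet[futureσ f T (p + n)] B ∧
    r = |(μ (A ∩ B)).toReal - (μ A).toReal * (μ B).toReal|}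

/-- `α^{-1}(u)`: the number of indices `n ≥ 1` with `α(n) ≥ u`, valued in `ℝ≥0∞`. -/
def alphaInvCount (α : ℕ → ℝ) (u : ℝ) : ℝ≥0∞ :=
  ∑' n : ℕ, if 1 ≤ n ∧ u ≤ α n then (1 : ℝ≥0∞) else 0

lemma Qf_nonneg (μ : Measure Ω) (f : Ω → ℝ) (u : ℝ) : 0 ≤ Qf μ f u :=
  Real.sInf_nonneg fun _ ht => ht.1

lemma alphaInvCount_le (α : ℕ → ℝ) (u : ℝ) (m : ℕ)
    (h : ∀ n : ℕ, 1 ≤ n → u ≤ α n → n < m) :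
    alphaInvCount α u ≤ (m : ℝ≥0∞) := by
  have h1 : ∀ n : ℕ, (if 1 ≤ n ∧ u ≤ α n then (1:ℝ≥0∞) else 0)
      ≤ (if n ∈ Finset.range m then (1:ℝ≥0∞) else 0) := by
    intro n
    by_cases hn : 1 ≤ n ∧ u ≤ α n
    · simp [hn, Finset.mem_range.mpr (h n hn.1 hn.2)]
    · simp [hn]
  calc alphaInvCount α u ≤ ∑' n : ℕ, (if n ∈ Finset.range m then (1:ℝ≥0∞) else 0) :=
        ENNReal.tsum_le_tsum h1
    _ = ∑ n ∈ Finset.range m, (if n ∈ Finset.range m then (1:ℝ≥0∞) else 0) :=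
        tsum_eq_sum (by intro n hn; simp [hn])
    _ = m := by
        rw [Finset.sum_ite_of_true (fun n hn => hn)]; simp

lemma integrable_aux (C e d : ℝ) (he : -1 < e) :
    IntegrableOn (fun u => if u < d then C * u ^ e else 0) (Set.Ioo (0:ℝ) 1) := by
  have h0 : IntervalIntegrable (fun u : ℝ => u ^ e) volume 0 1 :=
    intervalIntegral.intervalIntegrable_rpow' he
  have h1 : IntegrableOn (fun u : ℝ => u ^ e) (Set.Ioc 0 1) :=
    (intervalIntegrable_iff_integrableOn_Ioc_of_le (by norm_num)).mp h0
  have h2 : IntegrableOn (fun u : ℝ => C * u ^ e) (Set.Ioo (0:ℝ) 1) :=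
    ((h1.mono_set Set.Ioo_subset_Ioc_self).const_mul C)
  have h3 := h2.indicator (measurableSet_Iio (a := d))
  have heq : (fun u : ℝ => if u < d then C * u ^ e else 0)
      = (Set.Iio d).indicator (fun u => C * u ^ e) := by
    funext u; simp [Set.indicator_apply, Set.mem_Iio]
  rw [heq]
  exact h3

lemma integral_aux (C : ℝ) (e : ℝ) (he : -1 < e) (d : ℝ) (hd : 0 < d) :
    ∫ u in Set.Ioo (0:ℝ) 1, (if u < d then C * u ^ e else 0)
      = (C / (e+1)) * (min d 1) ^ (e+1) := by
  have hm : 0 < min d 1 := lt_min hd one_pos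
  have hind : (fun u : ℝ => if u < d then C * u ^ e else 0)
      = (Set.Iio d).indicator (fun u => C * u ^ e) := by
    funext u; simp [Set.indicator_apply, Set.mem_Iio]
  rw [hind, integral_indicator measurableSet_Iio]
  rw [Measure.restrict_restrict measurableSet_Iio]
  have hset : Set.Iio d ∩ Set.Ioo (0:ℝ) 1 = Set.Ioo 0 (min d 1) := by
    ext u; simp only [Set.mem_inter_iff, Set.mem_Iio, Set.mem_Ioo, lt_min_iff]
    tauto
  rw [hset, ← integral_Ioc_eq_integral_Ioo,
    ← intervalIntegral.integral_of_le hm.le, intervalIntegral.integral_const_mul,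
    integral_rpow (Or.inl he)]
  rw [Real.zero_rpow (by linarith)]
  ring


set_option maxHeartbeats 1000000 in
/-- **Remark 2.4 (first part).** If `p > 2`, `a > p`, `Q_f(u) ≤ C u^{-1/a}` and
`α(k) = o(k^{-a(p-1)/(a-p)})`, then
`lim_{t→∞} t^{p-1} ∫_0^1 Q_f(u) 1{α^{-1}(u) Q_f(u) > t} du = 0`. -/
theorem alpha_condition_of_weak_moment
    (μ : Measure Ω) [IsProbabilityMeasure μ] (T : Ω → Ω) (f : Ω → ℝ)
    (p a : ℝ) (hp : 2 < p) (ha : p < a)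
    (hT : MeasurePreserving T μ μ) (hf : Measurable f)
    (hint : Integrable f μ) (hcent : ∫ x, f x ∂μ = 0)
    (C : ℝ) (hC : 0 < C)
    (hQ : ∀ u ∈ Set.Ioo (0 : ℝ) 1, Qf μ f u ≤ C * u ^ (-(1 / a)))
    (halpha : Tendsto (fun k : ℕ => (k : ℝ) ^ (a * (p - 1) / (a - p)) * alphaMix μ f T k)
      atTop (nhds 0)) :
    Tendsto
      (fun t : ℝ => t ^ (p - 1) *
        ∫ u in Set.Ioo (0 : ℝ) 1,
          (if ENNReal.ofReal t <
              alphaInvCount (alphaMix μ f T) u * ENNReal.ofReal (Qf μ f u)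
            then Qf μ f u else 0))
      atTop (nhds 0) := by
  set α := alphaMix μ f T with hα
  have ha0 : (0:ℝ) < a := by linarith
  have ha1 : (1:ℝ) < a := by linarith
  have hp1 : (0:ℝ) < p - 1 := by linarith
  have hap : (0:ℝ) < a - p := by linarith
  set b := a * (p - 1) / (a - p) with hbdef
  have hb : 0 < b := div_pos (mul_pos ha0 hp1) hap
  set θ := 1 - 1/a with hθdef
  have hθ : 0 < θ := by
    have : 1/a < 1 := by rw [div_lt_one ha0]; exact ha1
    simp only [hθdef]; linarith
  set c := 1/a + 1/b with hcdef
  have hc : 0 < c := by positivity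
  have hcval : c = (a-1)/(a*(p-1)) := by
    rw [hcdef, hbdef]
    field_simp
    ring
  have hcθ : (1/c) * θ = p - 1 := by
    rw [hcval, hθdef]
    have h1 : a - 1 ≠ 0 := by linarith
    field_simp
  have haθ : a * θ = a - 1 := by rw [hθdef]; field_simp
  have he : (-1:ℝ) < -(1/a) := by
    have : 1/a < 1 := by rw [div_lt_one ha0]; exact ha1
    linarith
  -- the nonnegativity of the integrand, used several times
  have hFnn : ∀ t : ℝ, ∀ u : ℝ,
      0 ≤ (if ENNReal.ofReal t < alphaInvCount α u * ENNReal.ofReal (Qf μ f u)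
        then Qf μ f u else 0) := by
    intro t u
    split
    · exact Qf_nonneg μ f u
    · exact le_refl 0
  rw [Metric.tendsto_nhds]
  intro η hη
  -- choice of constants
  set M := min 1 (η * θ / (4*C)) with hMdef
  have hM : 0 < M := lt_min one_pos (by positivity)
  set s := M ^ (1/(p-1)) / (2*C) with hsdef
  have hs : 0 < s := by positivity
  set ε := s ^ b with hεdef
  have hε : 0 < ε := Real.rpow_pos_of_pos hs b
  have hεs : ε ^ (1/b) = s := by
    rw [hεdef, ← Real.rpow_mul hs.le, mul_one_div_cancel hb.ne', Real.rpow_one]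
  -- get N from the mixing hypothesis
  obtain ⟨N0, hN0⟩ := eventually_atTop.mp ((Metric.tendsto_nhds.mp halpha) ε hε)
  set N := max N0 1 with hNdef
  have hαk : ∀ k : ℕ, N ≤ k → α k ≤ ε * (k:ℝ) ^ (-b) := by
    intro k hk
    have hk1 : 1 ≤ k := le_trans (le_max_right _ _) hk
    have hkR : (1:ℝ) ≤ (k:ℝ) := by exact_mod_cast hk1
    have hkb : 0 < (k:ℝ) ^ b := Real.rpow_pos_of_pos (by linarith) b
    have h1 := hN0 k (le_trans (le_max_left _ _) hk)
    rw [Real.dist_eq, sub_zero] at h1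
    have h2 : (k:ℝ)^b * α k < ε := lt_of_abs_lt h1
    have h3 : α k ≤ ε / (k:ℝ)^b := by
      rw [le_div_iff₀ hkb]
      have := mul_comm ((k:ℝ)^b) (α k)
      linarith
    rw [Real.rpow_neg (by linarith : (0:ℝ) ≤ (k:ℝ))]
    simpa [div_eq_mul_inv] using h3
  set B1 := 2*((N:ℝ)+1)*C with hB1def
  have hB1 : 0 < B1 := by positivity
  set B2 := 2*s*C with hB2def
  have hB2pos : 0 < B2 := by positivity
  have hB2M : B2 ^ (p-1) = M := by
    rw [hB2def, hsdef]
    have h1 : 2 * (M ^ (1/(p-1)) / (2*C)) * C = M ^ (1/(p-1)) := by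
      field_simp
    rw [h1, ← Real.rpow_mul hM.le, one_div_mul_cancel hp1.ne', Real.rpow_one]
  -- key pointwise claim
  have key : ∀ t : ℝ, 0 < t → ∀ u : ℝ, u ∈ Set.Ioo (0:ℝ) 1 →
      max ((B1/t)^a) ((B2/t)^(1/c)) ≤ u →
      alphaInvCount α u * ENNReal.ofReal (Qf μ f u) ≤ ENNReal.ofReal t := by
    intro t ht u hu hδ
    obtain ⟨hu0, hu1⟩ := hu
    have hcount : alphaInvCount α u ≤ ((N + Nat.floor ((ε/u)^(1/b)) + 1 : ℕ) : ℝ≥0∞) := by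
      apply alphaInvCount_le
      intro n hn1 hn2
      by_cases hnN : n < N
      · omega
      · push_neg at hnN
        have h1 := hαk n hnN
        have hn1R : (1:ℝ) ≤ (n:ℝ) := by exact_mod_cast hn1
        have hnb : 0 < (n:ℝ)^b := Real.rpow_pos_of_pos (by linarith) b
        have h2 : u ≤ ε * ((n:ℝ)^b)⁻¹ := by
          rw [← Real.rpow_neg (by linarith : (0:ℝ) ≤ (n:ℝ))]
          exact le_trans hn2 h1
        have h3 : (n:ℝ)^b ≤ ε/u := by
          rw [le_div_iff₀ hu0]
          have h2' : (n:ℝ)^b * u ≤ (n:ℝ)^b * (ε * ((n:ℝ)^b)⁻¹) := by nlinarith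
          have h2'' : (n:ℝ)^b * (ε * ((n:ℝ)^b)⁻¹) = ε := by field_simp
          linarith
        have h4 : (n:ℝ) ≤ (ε/u)^(1/b) := by
          calc (n:ℝ) = ((n:ℝ)^b)^(1/b) := by
                rw [← Real.rpow_mul (by linarith), mul_one_div_cancel hb.ne', Real.rpow_one]
            _ ≤ (ε/u)^(1/b) := Real.rpow_le_rpow hnb.le h3 (by positivity)
        have h5 : n ≤ Nat.floor ((ε/u)^(1/b)) := Nat.le_floor h4
        omega
    have hm : ((N + Nat.floor ((ε/u)^(1/b)) + 1 : ℕ) : ℝ) ≤ ((N:ℝ)+1) + s * u^(-(1/b)) := by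
      push_cast
      have h6 : ((Nat.floor ((ε/u)^(1/b)) : ℝ)) ≤ (ε/u)^(1/b) :=
        Nat.floor_le (by positivity)
      have h7 : (ε/u)^(1/b) = s * u^(-(1/b)) := by
        rw [Real.div_rpow hε.le hu0.le, hεs, Real.rpow_neg hu0.le, div_eq_mul_inv]
      linarith
    have hQu := hQ u ⟨hu0, hu1⟩
    have hδ1 : (B1/t)^a ≤ u := le_trans (le_max_left _ _) hδ
    have hδ2 : (B2/t)^(1/c) ≤ u := le_trans (le_max_right _ _) hδ
    have hua : B1/t ≤ u^(1/a) := by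
      calc B1/t = ((B1/t)^a)^(1/a) := by
            rw [← Real.rpow_mul (by positivity), mul_one_div_cancel ha0.ne', Real.rpow_one]
        _ ≤ u^(1/a) := Real.rpow_le_rpow (by positivity) hδ1 (by positivity)
    have huc : B2/t ≤ u^c := by
      calc B2/t = ((B2/t)^(1/c))^c := by
            rw [← Real.rpow_mul (by positivity), one_div_mul_cancel hc.ne', Real.rpow_one]
        _ ≤ u^c := Real.rpow_le_rpow (by positivity) hδ2 hc.le
    have piece1 : ((N:ℝ)+1) * (C * u^(-(1/a))) ≤ t/2 := by
      have hupos : 0 < u^(1/a) := Real.rpow_pos_of_pos hu0 _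
      have hBt : 0 < B1/t := by positivity
      have h8 : u^(-(1/a)) ≤ t/B1 := by
        rw [Real.rpow_neg hu0.le]
        calc (u^(1/a))⁻¹ ≤ (B1/t)⁻¹ := by
              exact inv_anti₀ hBt hua
          _ = t/B1 := by rw [inv_div]
      calc ((N:ℝ)+1) * (C * u^(-(1/a))) ≤ ((N:ℝ)+1) * (C * (t/B1)) := by
            apply mul_le_mul_of_nonneg_left _ (by positivity)
            exact mul_le_mul_of_nonneg_left h8 hC.le
        _ = t/2 := by
            rw [hB1def]; field_simp
    have piece2 : s * (C * u^(-c)) ≤ t/2 := by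
      have hupos : 0 < u^c := Real.rpow_pos_of_pos hu0 _
      have hBt : 0 < B2/t := by positivity
      have h8 : u^(-c) ≤ t/B2 := by
        rw [Real.rpow_neg hu0.le]
        calc (u^c)⁻¹ ≤ (B2/t)⁻¹ := by
              exact inv_anti₀ hBt huc
          _ = t/B2 := by rw [inv_div]
      calc s * (C * u^(-c)) ≤ s * (C * (t/B2)) := by
            apply mul_le_mul_of_nonneg_left _ hs.le
            exact mul_le_mul_of_nonneg_left h8 hC.le
        _ = t/2 := by
            rw [hB2def]; field_simp
    have hsplit : u^(-(1/b)) * u^(-(1/a)) = u^(-c) := by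
      rw [← Real.rpow_add hu0]
      congr 1
      rw [hcdef]; ring
    have hmain : ((N + Nat.floor ((ε/u)^(1/b)) + 1 : ℕ):ℝ) * (C * u^(-(1/a))) ≤ t := by
      have hpow : (0:ℝ) ≤ C * u^(-(1/a)) := by positivity
      calc ((N + Nat.floor ((ε/u)^(1/b)) + 1 : ℕ):ℝ) * (C * u^(-(1/a)))
          ≤ (((N:ℝ)+1) + s * u^(-(1/b))) * (C * u^(-(1/a))) :=
            mul_le_mul_of_nonneg_right hm hpow
        _ = ((N:ℝ)+1) * (C * u^(-(1/a))) + s * (C * (u^(-(1/b)) * u^(-(1/a)))) := by ring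
        _ = ((N:ℝ)+1) * (C * u^(-(1/a))) + s * (C * u^(-c)) := by rw [hsplit]
        _ ≤ t/2 + t/2 := add_le_add piece1 piece2
        _ = t := by ring
    calc alphaInvCount α u * ENNReal.ofReal (Qf μ f u)
        ≤ ((N + Nat.floor ((ε/u)^(1/b)) + 1 : ℕ) : ℝ≥0∞)
            * ENNReal.ofReal (C * u^(-(1/a))) :=
          mul_le_mul' hcount (ENNReal.ofReal_le_ofReal hQu)
      _ = ENNReal.ofReal (((N + Nat.floor ((ε/u)^(1/b)) + 1 : ℕ):ℝ) * (C * u^(-(1/a)))) := by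
          rw [← ENNReal.ofReal_natCast, ← ENNReal.ofReal_mul (by positivity)]
      _ ≤ ENNReal.ofReal t := ENNReal.ofReal_le_ofReal hmain
  -- main bound
  have bound : ∀ t : ℝ, 1 ≤ t →
      t^(p-1) * ∫ u in Set.Ioo (0:ℝ) 1,
          (if ENNReal.ofReal t < alphaInvCount α u * ENNReal.ofReal (Qf μ f u)
            then Qf μ f u else 0)
      ≤ (C/θ) * (B1^(a-1) * t^(p-a)) + (C/θ) * M := by
    intro t ht1
    have ht : (0:ℝ) < t := lt_of_lt_of_le one_pos ht1
    set d := max ((B1/t)^a) ((B2/t)^(1/c)) with hddef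
    have hd : 0 < d :=
      lt_of_lt_of_le (Real.rpow_pos_of_pos (by positivity) a) (le_max_left _ _)
    have hmono : ∀ u ∈ Set.Ioo (0:ℝ) 1,
        (if ENNReal.ofReal t < alphaInvCount α u * ENNReal.ofReal (Qf μ f u)
          then Qf μ f u else 0)
        ≤ (if u < d then C * u ^ (-(1/a)) else 0) := by
      intro u hu
      by_cases hcond : ENNReal.ofReal t < alphaInvCount α u * ENNReal.ofReal (Qf μ f u)
      · have hud : u < d := by
          by_contra hcon
          push_neg at hcon
          exact absurd hcond (not_lt.mpr (key t ht u hu hcon))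
        rw [if_pos hcond, if_pos hud]
        exact hQ u hu
      · rw [if_neg hcond]
        by_cases h : u < d
        · rw [if_pos h]
          have := hu.1
          positivity
        · rw [if_neg h]
    have hIle : (∫ u in Set.Ioo (0:ℝ) 1,
          (if ENNReal.ofReal t < alphaInvCount α u * ENNReal.ofReal (Qf μ f u)
            then Qf μ f u else 0))
        ≤ ∫ u in Set.Ioo (0:ℝ) 1, (if u < d then C * u ^ (-(1/a)) else 0) :=
      integral_mono_of_nonneg (Filter.Eventually.of_forall (hFnn t))
        (integrable_aux C (-(1/a)) d he)
        ((ae_restrict_mem measurableSet_Ioo).mono hmono)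
    rw [integral_aux C (-(1/a)) he d hd] at hIle
    have hθe : -(1/a) + 1 = θ := by rw [hθdef]; ring
    rw [hθe] at hIle
    have hmin : (min d 1)^θ ≤ B1^(a-1)/t^(a-1) + M/t^(p-1) := by
      have h3 : ((B1/t)^a)^θ = B1^(a-1)/t^(a-1) := by
        rw [← Real.rpow_mul (by positivity), haθ, Real.div_rpow hB1.le ht.le]
      have h4 : ((B2/t)^(1/c))^θ = M/t^(p-1) := by
        rw [← Real.rpow_mul (by positivity), hcθ, Real.div_rpow hB2pos.le ht.le, hB2M]
      have h1 : (min d 1)^θ ≤ d^θ :=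
        Real.rpow_le_rpow (le_min hd.le zero_le_one) (min_le_left _ _) hθ.le
      have h2 : d^θ ≤ ((B1/t)^a)^θ + ((B2/t)^(1/c))^θ := by
        rcases max_cases ((B1/t)^a) ((B2/t)^(1/c)) with ⟨hmax, _⟩ | ⟨hmax, _⟩
        · rw [hddef, hmax]
          have : (0:ℝ) ≤ ((B2/t)^(1/c))^θ := Real.rpow_nonneg (by positivity) θ
          linarith
        · rw [hddef, hmax]
          have : (0:ℝ) ≤ ((B1/t)^a)^θ := Real.rpow_nonneg (by positivity) θ
          linarith
      rw [h3, h4] at h2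
      linarith
    have htp : 0 < t^(p-1) := Real.rpow_pos_of_pos ht _
    have hta : 0 < t^(a-1) := Real.rpow_pos_of_pos ht _
    have hsub : t^(p-1) / t^(a-1) = t^(p-a) := by
      rw [← Real.rpow_sub ht]
      congr 1; ring
    calc t^(p-1) * ∫ u in Set.Ioo (0:ℝ) 1,
          (if ENNReal.ofReal t < alphaInvCount α u * ENNReal.ofReal (Qf μ f u)
            then Qf μ f u else 0)
        ≤ t^(p-1) * ((C/θ) * (min d 1)^θ) := mul_le_mul_of_nonneg_left hIle htp.le
      _ ≤ t^(p-1) * ((C/θ) * (B1^(a-1)/t^(a-1) + M/t^(p-1))) := by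
          apply mul_le_mul_of_nonneg_left _ htp.le
          exact mul_le_mul_of_nonneg_left hmin (by positivity)
      _ = (C/θ) * (B1^(a-1) * (t^(p-1)/t^(a-1))) + (C/θ) * (M * (t^(p-1)/t^(p-1))) := by
          ring
      _ = (C/θ) * (B1^(a-1) * t^(p-a)) + (C/θ) * M := by
          rw [hsub, div_self htp.ne']; ring
  -- conclusion
  have hM4 : (C/θ)*M ≤ η/4 := by
    have h1 : M ≤ η*θ/(4*C) := min_le_right _ _
    calc (C/θ)*M ≤ (C/θ)*(η*θ/(4*C)) := mul_le_mul_of_nonneg_left h1 (by positivity)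
      _ = η/4 := by field_simp
  have htend : Tendsto (fun t : ℝ => (C/θ)*(B1^(a-1) * t^(p-a))) atTop (nhds 0) := by
    have h0 : Tendsto (fun t:ℝ => t^(p-a)) atTop (nhds 0) := by
      have h := tendsto_rpow_neg_atTop hap
      have : (fun t:ℝ => t^(-(a-p))) = fun t:ℝ => t^(p-a) := by
        funext t; congr 1; ring
      rwa [this] at h
    have h2 := h0.const_mul ((C/θ)*B1^(a-1))
    simp only [mul_zero] at h2
    have : (fun t:ℝ => (C/θ)*B1^(a-1) * t^(p-a)) = fun t:ℝ => (C/θ)*(B1^(a-1) * t^(p-a)) := by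
      funext t; ring
    rwa [this] at h2
  have hev2 : ∀ᶠ t : ℝ in atTop, (C/θ)*(B1^(a-1) * t^(p-a)) < η/2 :=
    htend.eventually_lt_const (by linarith)
  filter_upwards [eventually_ge_atTop (1:ℝ), hev2] with t ht1 ht2
  rw [Real.dist_eq, sub_zero]
  have hnn : 0 ≤ t^(p-1) * ∫ u in Set.Ioo (0:ℝ) 1,
      (if ENNReal.ofReal t < alphaInvCount α u * ENNReal.ofReal (Qf μ f u)
        then Qf μ f u else 0) := by
    apply mul_nonneg (Real.rpow_nonneg (by linarith) _)
    exact setIntegral_nonneg measurableSet_Ioo (fun u _ => hFnn t u)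
  rw [abs_of_nonneg hnn]
  calc t^(p-1) * ∫ u in Set.Ioo (0:ℝ) 1,
        (if ENNReal.ofReal t < alphaInvCount α u * ENNReal.ofReal (Qf μ f u)
          then Qf μ f u else 0)
      ≤ (C/θ) * (B1^(a-1) * t^(p-a)) + (C/θ) * M := bound t ht1
    _ < η := by linarith

end Stmt5

end
end

section
/- Let (τ(i))_{i≥0} and (α(i))_{i≥0} be non-increasing sequences of non-negative real numbers and let Q : (0,1] → [0,∞) be a non-increasing function, such that τ(i) ≤ 2 ∫_0^{2α(i)} Q(u) du for every i ≥ 0. Let G be the generalized inverse of the function x ↦ ∫_0^x Q(u) du. Then for every u ∈ (0,1), (τ/2)^{-1}(G^{-1}(u)) ≤ α^{-1}(u/2), where G^{-1}(u) := ∫_0^u Q(s) ds, (τ/2)^{-1}(v) := inf{k ∈ ℕ : τ(k)/2 ≤ v} and α^{-1}(w) := inf{k ∈ ℕ : α(k) ≤ w}. -/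
open MeasureTheory Filter Set
open scoped ENNReal NNReal

noncomputable section

namespace Stmt7

/-- `(τ/2)^{-1}(v) = inf{k ∈ ℕ : τ(k)/2 ≤ v}`, valued in `ℝ≥0∞` (`∞` if there is no such `k`). -/
def tauInv (τ : ℕ → ℝ) (v : ℝ) : ℝ≥0∞ :=
  ⨅ (k : ℕ) (_ : τ k / 2 ≤ v), (k : ℝ≥0∞)

/-- `α^{-1}(w) = inf{k ∈ ℕ : α(k) ≤ w}`, valued in `ℝ≥0∞` (`∞` if there is no such `k`). -/
def alphaInv (α : ℕ → ℝ) (w : ℝ) : ℝ≥0∞ :=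
  ⨅ (k : ℕ) (_ : α k ≤ w), (k : ℝ≥0∞)

/-- **Inequality (3.5).** If `(τ(i))`, `(α(i))` are non-increasing non-negative sequences,
`Q : (0,1] → [0,∞)` is non-increasing (and integrable), and `τ(i) ≤ 2∫_0^{2α(i)} Q(u) du`
for all `i`, then for every `u ∈ (0,1)`,
`(τ/2)^{-1}(G^{-1}(u)) ≤ α^{-1}(u/2)` where `G^{-1}(u) = ∫_0^u Q(s) ds`. -/
theorem tauInv_Ginv_le_alphaInv
    (τ α : ℕ → ℝ) (Q : ℝ → ℝ)
    (hτ0 : ∀ i, 0 ≤ τ i) (hτmono : Antitone τ)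
    (hα0 : ∀ i, 0 ≤ α i) (hαmono : Antitone α)
    (hQ0 : ∀ u ∈ Set.Ioc (0 : ℝ) 1, 0 ≤ Q u)
    (hQmono : AntitoneOn Q (Set.Ioc (0 : ℝ) 1))
    (hQint : IntegrableOn Q (Set.Ioc (0 : ℝ) 1))
    (hcomp : ∀ i : ℕ, τ i ≤ 2 * ∫ u in Set.Ioo (0 : ℝ) (2 * α i), Q u) :
    ∀ u ∈ Set.Ioo (0 : ℝ) 1,
      tauInv τ (∫ s in Set.Ioo (0 : ℝ) u, Q s) ≤ alphaInv α (u / 2) := by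
  intro u hu
  refine le_iInf fun k => le_iInf fun hk => ?_
  have h2αu : 2 * α k ≤ u := by linarith
  have hsub : Set.Ioo (0 : ℝ) (2 * α k) ⊆ Set.Ioo (0 : ℝ) u :=
    Set.Ioo_subset_Ioo le_rfl h2αu
  have hsub1 : Set.Ioo (0 : ℝ) u ⊆ Set.Ioc (0 : ℝ) 1 := fun x hx =>
    ⟨hx.1, le_of_lt (hx.2.trans hu.2)⟩
  have hint : IntegrableOn Q (Set.Ioo (0 : ℝ) u) := hQint.mono_set hsub1
  have hmono : (∫ s in Set.Ioo (0 : ℝ) (2 * α k), Q s) ≤ ∫ s in Set.Ioo (0 : ℝ) u, Q s := by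
    refine setIntegral_mono_set hint ?_ (HasSubset.Subset.eventuallyLE hsub)
    filter_upwards [ae_restrict_mem measurableSet_Ioo] with x hx
    exact hQ0 x (hsub1 hx)
  have hτk : τ k / 2 ≤ ∫ s in Set.Ioo (0 : ℝ) u, Q s := by
    have := hcomp k
    linarith
  exact iInf₂_le k hτk

end Stmt7

end
end

section
/- Let p > 2, let T be an invertible bi-measurable measure-preserving map on a probability space (Ω,F,μ), let N, K be positive integers with 4K ≤ N, and let A ∈ F be such that the sets T^i A, 0 ≤ i ≤ N−1, are pairwise disjoint. Define h := (N^{1/p}/K^{1/2+1/p}) · 1(⋃_{j=1}^{K} T^{N−j}A) and g := ∑_{j=0}^{K−1} h∘T^j. Then there is a constant C_p depending only on p such that for every positive integer n: ‖g − g∘T^n‖_{L^p} ≤ C_p · n K^{-1/2} if K > n, and ‖g − g∘T^n‖_{L^p} ≤ C_p · K^{1/2} if K ≤ n. -/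
open MeasureTheory Filter Set
open scoped ENNReal NNReal

noncomputable section

namespace Stmt13


private lemma sum_shift (u : ℕ → ℝ) {n K : ℕ} (hnK : n ≤ K) :
    (∑ j ∈ Finset.range K, u j) - ∑ j ∈ Finset.range K, u (j + n)
      = (∑ j ∈ Finset.range n, u j) - ∑ j ∈ Finset.range n, u (K + j) := by
  have h1 : ∑ j ∈ Finset.Ico n (K + n), u j = ∑ j ∈ Finset.range K, u (j + n) := by
    rw [Finset.sum_Ico_eq_sum_range]
    simp only [Nat.add_sub_cancel]
    exact Finset.sum_congr rfl fun j _ => by rw [add_comm]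
  have h2 : ∑ j ∈ Finset.range n, u j + ∑ j ∈ Finset.Ico n K, u j
      = ∑ j ∈ Finset.range K, u j := by
    rw [Finset.range_eq_Ico, Finset.range_eq_Ico]
    exact Finset.sum_Ico_consecutive u (Nat.zero_le n) hnK
  have h3 : ∑ j ∈ Finset.Ico n K, u j + ∑ j ∈ Finset.Ico K (K + n), u j
      = ∑ j ∈ Finset.Ico n (K + n), u j :=
    Finset.sum_Ico_consecutive _ hnK (Nat.le_add_right _ _)
  have h4 : ∑ j ∈ Finset.Ico K (K + n), u j = ∑ j ∈ Finset.range n, u (K + j) := by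
    rw [Finset.sum_Ico_eq_sum_range]
    simp only [Nat.add_sub_cancel_left]
  linarith

/-- **Inequality (3.21).** With `h = (N^{1/p}/K^{1/2+1/p}) 1(⋃_{j=1}^K T^{N-j}A)` and
`g = ∑_{j=0}^{K-1} h ∘ T^j`, there is a constant `C_p` depending only on `p` such that
for every `n ≥ 1`, `‖g - g ∘ T^n‖_p ≤ C_p n K^{-1/2}` if `K > n`, and
`‖g - g ∘ T^n‖_p ≤ C_p K^{1/2}` if `K ≤ n`. -/
theorem coboundary_Lp_bound (p : ℝ) (hp : 2 < p) :
    ∃ C : ℝ, 0 < C ∧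
      ∀ (Ω : Type) (_ : MeasurableSpace Ω) (μ : Measure Ω), IsProbabilityMeasure μ →
      ∀ T : Ω ≃ᵐ Ω, MeasurePreserving (⇑T) μ μ →
      ∀ N K : ℕ, 1 ≤ K → 4 * K ≤ N →
      ∀ A : Set Ω, MeasurableSet A →
      (∀ i j : ℕ, i < N → j < N → i ≠ j →
        Disjoint ((⇑T)^[i] '' A) ((⇑T)^[j] '' A)) →
      ∀ h g : Ω → ℝ,
        (h = fun x => ((N : ℝ) ^ ((1 : ℝ) / p) / (K : ℝ) ^ ((1 : ℝ) / 2 + 1 / p)) *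
          Set.indicator (⋃ j ∈ Finset.Icc 1 K, (⇑T)^[N - j] '' A) (fun _ => (1 : ℝ)) x) →
        (g = fun x => ∑ j ∈ Finset.range K, h ((⇑T)^[j] x)) →
      ∀ n : ℕ, 1 ≤ n →
        (n < K →
          eLpNorm (fun x => g x - g ((⇑T)^[n] x)) (ENNReal.ofReal p) μ ≤
            ENNReal.ofReal (C * n * (K : ℝ) ^ (-(1 : ℝ) / 2))) ∧
        (K ≤ n →
          eLpNorm (fun x => g x - g ((⇑T)^[n] x)) (ENNReal.ofReal p) μ ≤
            ENNReal.ofReal (C * (K : ℝ) ^ ((1 : ℝ) / 2))) := by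
  refine ⟨2, by norm_num, ?_⟩
  intro Ω mΩ μ hμ T hT N K hK hKN A hA hdisj h g hh hg n hn
  have hp0 : (0 : ℝ) < p := by linarith
  have hp1 : (1 : ℝ) ≤ p := by linarith
  set P : ℝ≥0∞ := ENNReal.ofReal p with hP
  have hPne0 : P ≠ 0 := by
    simp [hP, ENNReal.ofReal_eq_zero]; linarith
  have hPnetop : P ≠ ∞ := ENNReal.ofReal_ne_top
  have hPe : (1 : ℝ≥0∞) ≤ P := by
    rw [hP, ENNReal.one_le_ofReal]; exact hp1
  have hNpos : 0 < N := lt_of_lt_of_le (by omega) hKN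
  have hKR : (0 : ℝ) < K := by exact_mod_cast hK
  have hNR : (0 : ℝ) < N := by exact_mod_cast hNpos
  set c : ℝ := (N : ℝ) ^ ((1 : ℝ) / p) / (K : ℝ) ^ ((1 : ℝ) / 2 + 1 / p) with hc
  have hcpos : 0 < c := by positivity
  set S : Set Ω := ⋃ j ∈ Finset.Icc 1 K, (⇑T)^[N - j] '' A with hS
  -- measurability and measure of iterated images
  have himg : ∀ m : ℕ, MeasurableSet ((⇑T)^[m] '' A) ∧ μ ((⇑T)^[m] '' A) = μ A := by
    intro m
    induction m with
    | zero =>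
      simp [hA]
    | succ m ih =>
      rw [Function.iterate_succ', Set.image_comp]
      constructor
      · exact T.measurableSet_image.mpr ih.1
      · rw [T.image_eq_preimage_symm,
          (hT.symm T).measure_preimage ih.1.nullMeasurableSet, ih.2]
  have hSmeas : MeasurableSet S :=
    Finset.measurableSet_biUnion _ fun j _ => (himg (N - j)).1
  -- μ A ≤ 1/N
  have hAle : μ A ≤ ((N : ℝ≥0∞))⁻¹ := by
    rw [ENNReal.le_inv_iff_mul_le]
    have hd : ((Finset.range N : Finset ℕ) : Set ℕ).PairwiseDisjoint
        (fun i => (⇑T)^[i] '' A) := by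
      intro i hi j hj hij
      exact hdisj i j (by simpa using hi) (by simpa using hj) hij
    have := measure_biUnion_finset (μ := μ) hd (fun i _ => (himg i).1)
    have hle : μ (⋃ i ∈ Finset.range N, (⇑T)^[i] '' A) ≤ 1 := prob_le_one
    rw [this] at hle
    calc μ A * N = ∑ i ∈ Finset.range N, μ ((⇑T)^[i] '' A) := by
          simp [Finset.sum_congr rfl fun i _ => (himg i).2, mul_comm]
      _ ≤ 1 := hle
  -- μ S ≤ K/N
  have hSle : μ S ≤ ENNReal.ofReal ((K : ℝ) / N) := by
    have h1 : μ S ≤ (K : ℝ≥0∞) * μ A := by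
      calc μ S ≤ ∑ j ∈ Finset.Icc 1 K, μ ((⇑T)^[N - j] '' A) :=
            measure_biUnion_finset_le _ _
        _ = (K : ℝ≥0∞) * μ A := by
            simp [Finset.sum_congr rfl fun j _ => (himg (N - j)).2]
    have h2 : (K : ℝ≥0∞) * μ A ≤ (K : ℝ≥0∞) * ((N : ℝ≥0∞))⁻¹ :=
      mul_le_mul_right hAle _
    have h3 : (K : ℝ≥0∞) * ((N : ℝ≥0∞))⁻¹ = ENNReal.ofReal ((K : ℝ) / N) := by
      rw [ENNReal.ofReal_div_of_pos hNR, ENNReal.ofReal_natCast,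
        ENNReal.ofReal_natCast, div_eq_mul_inv]
    exact h1.trans (h2.trans_eq h3)
  -- h as an indicator
  have hh' : h = S.indicator fun _ => c := by
    funext x
    by_cases hx : x ∈ S
    · simp only [hh, Set.indicator_of_mem hx, mul_one]
    · simp only [hh, Set.indicator_of_notMem hx, mul_zero]
  have hsm : StronglyMeasurable h := by
    rw [hh']; exact stronglyMeasurable_const.indicator hSmeas
  -- the key bound on ‖h‖_p
  set B : ℝ≥0∞ := ENNReal.ofReal ((K : ℝ) ^ (-(1 : ℝ) / 2)) with hB
  have hrK : (0 : ℝ) ≤ (K : ℝ) ^ (-(1 : ℝ) / 2) := by positivity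
  have hnormh : eLpNorm h P μ ≤ B := by
    rw [hh', eLpNorm_indicator_const hSmeas hPne0 hPnetop]
    have htoReal : P.toReal = p := ENNReal.toReal_ofReal hp0.le
    rw [htoReal]
    have hmul : c * ((K : ℝ) / N) ^ ((1 : ℝ) / p) = (K : ℝ) ^ (-(1 : ℝ) / 2) := by
      have e1 : (K : ℝ) ^ ((1 : ℝ) / 2 + 1 / p)
          = (K : ℝ) ^ ((1 : ℝ) / 2) * (K : ℝ) ^ ((1 : ℝ) / p) := Real.rpow_add hKR _ _
      have e2 : (K : ℝ) ^ (-(1 : ℝ) / 2) = ((K : ℝ) ^ ((1 : ℝ) / 2))⁻¹ := by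
        rw [neg_div, Real.rpow_neg hKR.le]
      rw [Real.div_rpow hKR.le hNR.le, hc, e1, e2]
      have p1 : (0:ℝ) < (N : ℝ) ^ ((1 : ℝ) / p) := by positivity
      have p2 : (0:ℝ) < (K : ℝ) ^ ((1 : ℝ) / p) := by positivity
      have p3 : (0:ℝ) < (K : ℝ) ^ ((1 : ℝ) / 2) := by positivity
      field_simp
    calc (‖c‖₊ : ℝ≥0∞) * μ S ^ ((1:ℝ) / p)
        ≤ ENNReal.ofReal c * (ENNReal.ofReal ((K : ℝ) / N)) ^ ((1:ℝ) / p) := by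
          rw [← enorm_eq_nnnorm, Real.enorm_eq_ofReal hcpos.le]
          exact mul_le_mul_right (ENNReal.rpow_le_rpow hSle (by positivity)) _
      _ = B := by
          rw [ENNReal.ofReal_rpow_of_pos (by positivity),
            ← ENNReal.ofReal_mul hcpos.le, hmul, hB]
  -- bounds on sums of translates
  have haesm : ∀ m : ℕ, AEStronglyMeasurable (fun x => h ((⇑T)^[m] x)) μ :=
    fun m => (hsm.comp_measurable (hT.iterate m).measurable).aestronglyMeasurable
  have sum_bound : ∀ (m : ℕ) (f : ℕ → ℕ),
      eLpNorm (fun x => ∑ j ∈ Finset.range m, h ((⇑T)^[f j] x)) P μ ≤ (m : ℝ≥0∞) * B := by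
    intro m f
    have heq : (fun x => ∑ j ∈ Finset.range m, h ((⇑T)^[f j] x))
        = ∑ j ∈ Finset.range m, (fun x => h ((⇑T)^[f j] x)) := by
      funext x; simp
    rw [heq]
    calc eLpNorm (∑ j ∈ Finset.range m, fun x => h ((⇑T)^[f j] x)) P μ
        ≤ ∑ j ∈ Finset.range m, eLpNorm (fun x => h ((⇑T)^[f j] x)) P μ :=
          eLpNorm_sum_le (fun j _ => haesm (f j)) hPe
      _ ≤ ∑ _j ∈ Finset.range m, B := by
          refine Finset.sum_le_sum fun j _ => ?_
          rw [show (fun x => h ((⇑T)^[f j] x)) = h ∘ (⇑T)^[f j] from rfl,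
            eLpNorm_comp_measurePreserving hsm.aestronglyMeasurable (hT.iterate (f j))]
          exact hnormh
      _ = (m : ℝ≥0∞) * B := by simp [mul_comm]
  have hgaesm : AEStronglyMeasurable g μ := by
    rw [hg]
    exact (Finset.stronglyMeasurable_fun_sum (f := fun j x => h ((⇑T)^[j] x)) _ fun j _ =>
      hsm.comp_measurable (hT.iterate j).measurable).aestronglyMeasurable
  constructor
  · -- case n < K
    intro hnK
    have decomp : (fun x => g x - g ((⇑T)^[n] x))
        = (fun x => ∑ j ∈ Finset.range n, h ((⇑T)^[j] x))
          - (fun x => ∑ j ∈ Finset.range n, h ((⇑T)^[K + j] x)) := by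
      funext x
      simp only [Pi.sub_apply, hg]
      simp only [← Function.iterate_add_apply]
      exact sum_shift (fun j => h ((⇑T)^[j] x)) hnK.le
    rw [decomp]
    have haesum : ∀ f : ℕ → ℕ,
        AEStronglyMeasurable (fun x => ∑ j ∈ Finset.range n, h ((⇑T)^[f j] x)) μ := by
      intro f
      exact (Finset.stronglyMeasurable_fun_sum (f := fun j x => h ((⇑T)^[f j] x)) _ fun j _ =>
        hsm.comp_measurable (hT.iterate (f j)).measurable).aestronglyMeasurable
    calc eLpNorm _ P μ
        ≤ eLpNorm (fun x => ∑ j ∈ Finset.range n, h ((⇑T)^[j] x)) P μ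
          + eLpNorm (fun x => ∑ j ∈ Finset.range n, h ((⇑T)^[K + j] x)) P μ :=
          eLpNorm_sub_le (haesum id) (haesum (K + ·)) hPe
      _ ≤ (n : ℝ≥0∞) * B + (n : ℝ≥0∞) * B :=
          add_le_add (sum_bound n id) (sum_bound n (K + ·))
      _ = ENNReal.ofReal (2 * n * (K : ℝ) ^ (-(1 : ℝ) / 2)) := by
          rw [hB, ← ENNReal.ofReal_natCast n, ← ENNReal.ofReal_mul (by positivity),
            ← ENNReal.ofReal_add (by positivity) (by positivity)]
          congr 1
          ring
  · -- case K ≤ n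
    intro _
    have hcomp : eLpNorm (fun x => g ((⇑T)^[n] x)) P μ = eLpNorm g P μ := by
      rw [show (fun x => g ((⇑T)^[n] x)) = g ∘ (⇑T)^[n] from rfl,
        eLpNorm_comp_measurePreserving hgaesm (hT.iterate n)]
    have hgbound : eLpNorm g P μ ≤ (K : ℝ≥0∞) * B := by
      rw [hg]; exact sum_bound K id
    calc eLpNorm (fun x => g x - g ((⇑T)^[n] x)) P μ
        ≤ eLpNorm g P μ + eLpNorm (fun x => g ((⇑T)^[n] x)) P μ :=
          eLpNorm_sub_le hgaesm (hgaesm.comp_measurePreserving (hT.iterate n)) hPe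
      _ ≤ (K : ℝ≥0∞) * B + (K : ℝ≥0∞) * B := by
          rw [hcomp]; exact add_le_add hgbound hgbound
      _ = ENNReal.ofReal (2 * (K : ℝ) ^ ((1 : ℝ) / 2)) := by
          have key : (K : ℝ) * (K : ℝ) ^ (-(1 : ℝ) / 2) = (K : ℝ) ^ ((1 : ℝ) / 2) := by
            nth_rewrite 1 [← Real.rpow_one (K : ℝ)]
            rw [← Real.rpow_add hKR]
            norm_num
          rw [hB, ← ENNReal.ofReal_natCast K, ← ENNReal.ofReal_mul (by positivity),
            ← ENNReal.ofReal_add (by positivity) (by positivity)]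
          congr 1
          rw [key]
          ring

end Stmt13

end
end

section
/- Let (K_l)_{l≥1} be an increasing sequence of positive integers satisfying ∑_{i=1}^{l} K_i^{1/2} ≤ K_{l+1}^{1/2} for every l ≥ 1 and ∑_{l=1}^{∞} K_l/K_{l+1}^{1/2} < ∞. For a positive integer n, let i(n) be the unique index with K_{i(n)} ≤ n < K_{i(n)+1} (set i(n)=0 and the corresponding sums empty if n < K_1). Then ∑_{l=1}^{i(n)-1} K_l^{1/2} + K_{i(n)}^{1/2} + n K_{i(n)+1}^{-1/2} + ∑_{l=i(n)+2}^{∞} n K_l^{-1/2} ≤ (3 + ∑_{l=1}^{∞} K_l/K_{l+1}^{1/2}) · √n. In particular, if (b_l)_{l≥1} satisfies b_l ≤ n K_l^{-1/2} when K_l > n and b_l ≤ K_l^{1/2} when K_l ≤ n, then ∑_{l=1}^{∞} b_l ≤ (3 + ∑_{l=1}^{∞} K_l/K_{l+1}^{1/2}) √n. -/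
open Filter Set
open scoped ENNReal NNReal

noncomputable section

namespace Stmt14


lemma mono_aux (K : ℕ → ℕ) (hinc : ∀ l : ℕ, 1 ≤ l → K l < K (l + 1)) :
    ∀ a b : ℕ, 1 ≤ a → a ≤ b → K a ≤ K b := by
  intro a b ha hab
  induction b, hab using Nat.le_induction with
  | base => exact le_rfl
  | succ b hb ih => exact le_trans ih (le_of_lt (hinc b (le_trans ha hb)))

lemma ge_id_aux (K : ℕ → ℕ) (hpos : ∀ l : ℕ, 1 ≤ l → 1 ≤ K l)
    (hinc : ∀ l : ℕ, 1 ≤ l → K l < K (l + 1)) :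
    ∀ l : ℕ, 1 ≤ l → l ≤ K l := by
  intro l hl
  induction l, hl using Nat.le_induction with
  | base => exact hpos 1 le_rfl
  | succ l hl ih => have := hinc l hl; omega

lemma div_sqrt_le (n m : ℕ) (h : n ≤ m) : (n : ℝ) / Real.sqrt m ≤ Real.sqrt n := by
  rcases Nat.eq_zero_or_pos m with hm | hm
  · subst hm; simp [Nat.le_zero.mp h]
  have hm1 : (0:ℝ) < m := by exact_mod_cast hm
  have hms : 0 < Real.sqrt m := Real.sqrt_pos.mpr hm1
  rw [div_le_iff₀ hms]
  have hnn : (n:ℝ) = Real.sqrt n * Real.sqrt n := (Real.mul_self_sqrt (by positivity)).symm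
  have hle : Real.sqrt n ≤ Real.sqrt m := Real.sqrt_le_sqrt (by exact_mod_cast h)
  nlinarith [Real.sqrt_nonneg n]

lemma tail_lemma (K : ℕ → ℕ) (hpos : ∀ l : ℕ, 1 ≤ l → 1 ≤ K l)
    (hsum : Summable (fun l : ℕ =>
      if 1 ≤ l then (K l : ℝ) / Real.sqrt (K (l + 1)) else 0))
    (n i : ℕ) (hni : ∀ l, i + 1 ≤ l → (n : ℝ) ≤ K l) :
    Summable (fun l : ℕ => if i + 2 ≤ l then (n : ℝ) / Real.sqrt (K l) else 0) ∧
    (∑' l : ℕ, if i + 2 ≤ l then (n : ℝ) / Real.sqrt (K l) else 0) ≤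
      ∑' l : ℕ, if 1 ≤ l then (K l : ℝ) / Real.sqrt (K (l + 1)) else 0 := by
  set g := fun l : ℕ => if 1 ≤ l then (K l : ℝ) / Real.sqrt (K (l + 1)) else 0 with hgdef
  set t := fun l : ℕ => if i + 2 ≤ l then (n : ℝ) / Real.sqrt (K l) else 0 with htdef
  have hg0 : ∀ l, 0 ≤ g l := by
    intro l; simp only [hgdef]; split_ifs
    · positivity
    · exact le_rfl
  have ht0 : ∀ l, 0 ≤ t l := by
    intro l; simp only [htdef]; split_ifs
    · positivity
    · exact le_rfl
  have hshift : ∀ l, t (l + 1) ≤ g l := by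
    intro l
    by_cases h : i + 2 ≤ l + 1
    · have hl1 : 1 ≤ l := by omega
      simp only [htdef, hgdef, if_pos h, if_pos hl1]
      have hK1 : (1:ℝ) ≤ K (l + 1) := by exact_mod_cast hpos (l + 1) (by omega)
      have hs : 0 < Real.sqrt (K (l + 1)) := Real.sqrt_pos.mpr (by linarith)
      gcongr
      exact_mod_cast hni l (by omega)
    · simp only [htdef, if_neg h]
      exact hg0 l
  have ht' : Summable (fun l => t (l + 1)) :=
    Summable.of_nonneg_of_le (fun l => ht0 _) hshift hsum
  have ht : Summable t := (summable_nat_add_iff 1).mp ht'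
  refine ⟨ht, ?_⟩
  have h0 : t 0 = 0 := by simp [htdef]
  calc tsum t = t 0 + ∑' l, t (l + 1) := Summable.tsum_eq_zero_add ht
    _ = ∑' l, t (l + 1) := by rw [h0, zero_add]
    _ ≤ tsum g := Summable.tsum_le_tsum hshift ht' hsum


/-- **Computation at the end of the proof of Theorem 2.6.** If `(K_l)_{l≥1}` is increasing,
`∑_{i=1}^l K_i^{1/2} ≤ K_{l+1}^{1/2}` and `∑_l K_l/K_{l+1}^{1/2} < ∞`, then with
`K_{i(n)} ≤ n < K_{i(n)+1}` (and `i(n) = 0`, sums empty, if `n < K_1`),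
`∑_{l=1}^{i(n)-1} K_l^{1/2} + K_{i(n)}^{1/2} + n K_{i(n)+1}^{-1/2} + ∑_{l=i(n)+2}^∞ n K_l^{-1/2}
  ≤ (3 + ∑_{l=1}^∞ K_l/K_{l+1}^{1/2}) √n`;
in particular any sequence `(b_l)` with `b_l ≤ n K_l^{-1/2}` when `K_l > n` and
`b_l ≤ K_l^{1/2}` when `K_l ≤ n` satisfies `∑_{l=1}^∞ b_l ≤ (3 + ∑_l K_l/K_{l+1}^{1/2}) √n`. -/
theorem blocks_sum_bound (K : ℕ → ℕ)
    (hpos : ∀ l : ℕ, 1 ≤ l → 1 ≤ K l)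
    (hinc : ∀ l : ℕ, 1 ≤ l → K l < K (l + 1))
    (h13 : ∀ l : ℕ, 1 ≤ l →
      (∑ i ∈ Finset.Icc 1 l, Real.sqrt (K i)) ≤ Real.sqrt (K (l + 1)))
    (hsum : Summable (fun l : ℕ =>
      if 1 ≤ l then (K l : ℝ) / Real.sqrt (K (l + 1)) else 0)) :
    ∀ n : ℕ, 1 ≤ n →
      (∀ i : ℕ, ((1 ≤ i ∧ K i ≤ n ∧ n < K (i + 1)) ∨ (i = 0 ∧ n < K 1)) →
        (∑ l ∈ Finset.Icc 1 (i - 1), Real.sqrt (K l)) +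
            (if 1 ≤ i then Real.sqrt (K i) else 0) +
            (n : ℝ) / Real.sqrt (K (i + 1)) +
            (∑' l : ℕ, if i + 2 ≤ l then (n : ℝ) / Real.sqrt (K l) else 0) ≤
          (3 + ∑' l : ℕ, if 1 ≤ l then (K l : ℝ) / Real.sqrt (K (l + 1)) else 0) *
            Real.sqrt n) ∧
      (∀ b : ℕ → ℝ, (∀ l : ℕ, 1 ≤ l → 0 ≤ b l) →
        (∀ l : ℕ, 1 ≤ l → (n : ℕ) < K l → b l ≤ (n : ℝ) / Real.sqrt (K l)) →
        (∀ l : ℕ, 1 ≤ l → K l ≤ n → b l ≤ Real.sqrt (K l)) →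
        (∑' l : ℕ, if 1 ≤ l then b l else 0) ≤
          (3 + ∑' l : ℕ, if 1 ≤ l then (K l : ℝ) / Real.sqrt (K (l + 1)) else 0) *
            Real.sqrt n) := by
  intro n hn
  have hS0 : 0 ≤ ∑' l : ℕ, if 1 ≤ l then (K l : ℝ) / Real.sqrt (K (l + 1)) else 0 := by
    apply tsum_nonneg
    intro l; split_ifs
    · positivity
    · exact le_rfl
  have hsq1 : 1 ≤ Real.sqrt n := by
    rw [show (1:ℝ) = Real.sqrt 1 from (Real.sqrt_one).symm]
    exact Real.sqrt_le_sqrt (by exact_mod_cast hn)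
  have part1 : ∀ i : ℕ, ((1 ≤ i ∧ K i ≤ n ∧ n < K (i + 1)) ∨ (i = 0 ∧ n < K 1)) →
        (∑ l ∈ Finset.Icc 1 (i - 1), Real.sqrt (K l)) +
            (if 1 ≤ i then Real.sqrt (K i) else 0) +
            (n : ℝ) / Real.sqrt (K (i + 1)) +
            (∑' l : ℕ, if i + 2 ≤ l then (n : ℝ) / Real.sqrt (K l) else 0) ≤
          (3 + ∑' l : ℕ, if 1 ≤ l then (K l : ℝ) / Real.sqrt (K (l + 1)) else 0) *
            Real.sqrt n := by
    intro i hi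
    have hnKi1 : n < K (i + 1) := by
      rcases hi with ⟨_, _, h⟩ | ⟨h0, h⟩
      · exact h
      · subst h0; exact h
    have hni : ∀ l, i + 1 ≤ l → (n : ℝ) ≤ K l := by
      intro l hl
      have : K (i + 1) ≤ K l := mono_aux K hinc (i + 1) l (by omega) hl
      exact_mod_cast le_trans (le_of_lt hnKi1) this
    obtain ⟨-, hD⟩ := tail_lemma K hpos hsum n i hni
    have hC : (n : ℝ) / Real.sqrt (K (i + 1)) ≤ Real.sqrt n :=
      div_sqrt_le n (K (i + 1)) (le_of_lt hnKi1)
    have hA : (∑ l ∈ Finset.Icc 1 (i - 1), Real.sqrt (K l)) ≤ Real.sqrt n := by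
      rcases hi with ⟨hi1, hKi, -⟩ | ⟨h0, -⟩
      · have hsq : Real.sqrt (K i) ≤ Real.sqrt n := Real.sqrt_le_sqrt (by exact_mod_cast hKi)
        rcases Nat.lt_or_ge i 2 with h2 | h2
        · have : i - 1 = 0 := by omega
          rw [this]
          simp only [Finset.Icc_eq_empty (by omega : ¬ (1:ℕ) ≤ 0), Finset.sum_empty]
          linarith
        · have := h13 (i - 1) (by omega)
          rw [show i - 1 + 1 = i by omega] at this
          linarith
      · subst h0
        simp only [Nat.zero_sub, Finset.Icc_eq_empty (by omega : ¬ (1:ℕ) ≤ 0),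
          Finset.sum_empty]
        linarith
    have hB : (if 1 ≤ i then Real.sqrt (K i) else 0) ≤ Real.sqrt n := by
      split_ifs with h1
      · rcases hi with ⟨-, hKi, -⟩ | ⟨h0, -⟩
        · exact Real.sqrt_le_sqrt (by exact_mod_cast hKi)
        · omega
      · linarith
    have hSS : (∑' l : ℕ, if 1 ≤ l then (K l : ℝ) / Real.sqrt (K (l + 1)) else 0) ≤
        (∑' l : ℕ, if 1 ≤ l then (K l : ℝ) / Real.sqrt (K (l + 1)) else 0) * Real.sqrt n :=
      le_mul_of_one_le_right hS0 hsq1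
    nlinarith [hD, hA, hB, hC]
  refine ⟨part1, ?_⟩
  intro b hb0 hbn hbK
  -- find the index i
  have hex : ∃ j : ℕ, n < K (j + 1) := by
    refine ⟨n, ?_⟩
    have := ge_id_aux K hpos hinc (n + 1) (by omega)
    omega
  set i := Nat.find hex with hidef
  have hi1 : n < K (i + 1) := Nat.find_spec hex
  have hcase : (1 ≤ i ∧ K i ≤ n ∧ n < K (i + 1)) ∨ (i = 0 ∧ n < K 1) := by
    rcases Nat.eq_zero_or_pos i with h0 | h0
    · right; refine ⟨h0, ?_⟩; rw [h0] at hi1; exact hi1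
    · left
      refine ⟨h0, ?_, hi1⟩
      have hmin := Nat.find_min hex (show i - 1 < i by omega)
      rw [show i - 1 + 1 = i by omega] at hmin
      omega
  have P1 := part1 i hcase
  have hni : ∀ l, i + 1 ≤ l → (n : ℝ) ≤ K l := by
    intro l hl
    have : K (i + 1) ≤ K l := mono_aux K hinc (i + 1) l (by omega) hl
    exact_mod_cast le_trans (le_of_lt hi1) this
  obtain ⟨ht, hD⟩ := tail_lemma K hpos hsum n i hni
  set t := fun l : ℕ => if i + 2 ≤ l then (n : ℝ) / Real.sqrt (K l) else 0 with htdef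
  set u := fun l : ℕ => if 1 ≤ l ∧ l ≤ i + 1 then b l else 0 with hudef
  set tb := fun l : ℕ => if i + 2 ≤ l then b l else 0 with htbdef
  have hfun : (fun l : ℕ => if 1 ≤ l then b l else 0) = fun l => u l + tb l := by
    funext l
    simp only [hudef, htbdef]
    by_cases h1 : 1 ≤ l
    · by_cases h2 : l ≤ i + 1
      · rw [if_pos h1, if_pos ⟨h1, h2⟩, if_neg (by omega), add_zero]
      · rw [if_pos h1, if_neg (by omega), if_pos (by omega), zero_add]
    · rw [if_neg h1, if_neg (by omega), if_neg (by omega), add_zero]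
  have hu : Summable u := by
    apply summable_of_ne_finset_zero (s := Finset.Icc 1 (i + 1))
    intro l hl
    rw [Finset.mem_Icc] at hl
    exact if_neg hl
  have htb0 : ∀ l, 0 ≤ tb l := by
    intro l; simp only [htbdef]; split_ifs with h
    · exact hb0 l (by omega)
    · exact le_rfl
  have htble : ∀ l, tb l ≤ t l := by
    intro l; simp only [htbdef, htdef]; split_ifs with h
    · refine hbn l (by omega) ?_
      have : K (i + 1) ≤ K l := mono_aux K hinc (i + 1) l (by omega) (by omega)
      omega
    · exact le_rfl
  have htb : Summable tb := Summable.of_nonneg_of_le htb0 htble ht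
  have htsum_tb : tsum tb ≤ tsum t := Summable.tsum_le_tsum htble htb ht
  have htsum_u : tsum u = ∑ l ∈ Finset.Icc 1 (i + 1), b l := by
    rw [tsum_eq_sum (s := Finset.Icc 1 (i + 1))
      (fun l hl => if_neg (by rw [Finset.mem_Icc] at hl; exact hl))]
    refine Finset.sum_congr rfl ?_
    intro l hl
    rw [Finset.mem_Icc] at hl
    exact if_pos hl
  have hsum_u_le : (∑ l ∈ Finset.Icc 1 (i + 1), b l) ≤
      (∑ l ∈ Finset.Icc 1 (i - 1), Real.sqrt (K l)) +
        (if 1 ≤ i then Real.sqrt (K i) else 0) +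
        (n : ℝ) / Real.sqrt (K (i + 1)) := by
    rcases hcase with ⟨hi0, hKi, -⟩ | ⟨h0, hn1⟩
    · rw [if_pos hi0]
      rw [Finset.sum_Icc_succ_top (by omega : 1 ≤ i + 1)]
      rw [show i = i - 1 + 1 by omega, Finset.sum_Icc_succ_top (by omega : 1 ≤ i - 1 + 1),
        show i - 1 + 1 = i by omega]
      have h1 : (∑ l ∈ Finset.Icc 1 (i - 1), b l) ≤
          ∑ l ∈ Finset.Icc 1 (i - 1), Real.sqrt (K l) := by
        refine Finset.sum_le_sum ?_
        intro l hl
        rw [Finset.mem_Icc] at hl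
        refine hbK l hl.1 ?_
        have : K l ≤ K i := mono_aux K hinc l i hl.1 (by omega)
        omega
      have h2 : b i ≤ Real.sqrt (K i) := hbK i hi0 hKi
      have h3 : b (i + 1) ≤ (n : ℝ) / Real.sqrt (K (i + 1)) := hbn (i + 1) (by omega) hi1
      linarith
    · rw [h0]
      simp only [Nat.zero_sub, Finset.Icc_eq_empty (by omega : ¬ (1:ℕ) ≤ 0),
        Finset.sum_empty, if_neg (by omega : ¬ (1:ℕ) ≤ 0), zero_add]
      rw [Finset.Icc_self, Finset.sum_singleton]
      exact hbn 1 le_rfl hn1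
  calc (∑' l : ℕ, if 1 ≤ l then b l else 0) = tsum u + tsum tb := by
        rw [hfun]; exact Summable.tsum_add hu htb
    _ ≤ ((∑ l ∈ Finset.Icc 1 (i - 1), Real.sqrt (K l)) +
          (if 1 ≤ i then Real.sqrt (K i) else 0) +
          (n : ℝ) / Real.sqrt (K (i + 1))) + tsum t := by
        rw [htsum_u]
        exact add_le_add hsum_u_le htsum_tb
    _ ≤ (3 + ∑' l : ℕ, if 1 ≤ l then (K l : ℝ) / Real.sqrt (K (l + 1)) else 0) *
          Real.sqrt n := P1

end Stmt14

end
end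

section
/- Let p > 2, let T be an invertible bi-measurable measure-preserving map on a probability space (Ω,F,μ), let l ≥ 2, and let (K_m)_{m≥1}, (N_m)_{m≥1} be increasing sequences of positive integers with 4K_m ≤ N_m for all m. For each m let A_m ∈ F be such that the sets T^i A_m, 0 ≤ i ≤ N_m−1, are pairwise disjoint and μ(⋃_{i=0}^{N_m−1} T^i A_m) ≥ 1/2, and set g_m := ∑_{j=0}^{K_m−1} h_m∘T^j with h_m := (N_m^{1/p}/K_m^{1/2+1/p}) 1(⋃_{j=1}^{K_m} T^{N_m−j}A_m), and g := ∑_{m=1}^{∞} g_m (assumed to converge a.e.). If 4 N_l^{-1/p} · l · N_{l−1} < 1, then μ{ max_{1 ≤ i < i' ≤ N_l} |g∘T^{i'} − g∘T^{i}| / (i'−i)^{1/2−1/p} ≥ N_l^{1/p}/2 } ≥ 1/2 − K_l/(2N_l) − 2 N_l ∑_{l' > l} K_{l'}/N_{l'}. -/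
open MeasureTheory Filter Set
open scoped ENNReal NNReal

noncomputable section

namespace Stmt15

variable {Ω : Type} [MeasurableSpace Ω] (T : Ω ≃ᵐ Ω)

theorem iter_image_eq_preimage (e : ℕ) (s : Set Ω) :
    (⇑T)^[e] '' s = ((⇑T.symm)^[e]) ⁻¹' s := by
  exact congrFun (Set.image_eq_preimage_of_inverse
    (Function.LeftInverse.iterate T.symm_apply_apply e)
    (Function.LeftInverse.iterate T.apply_symm_apply e)) s

theorem iter_image_measurable (e : ℕ) {s : Set Ω} (hs : MeasurableSet s) :
    MeasurableSet ((⇑T)^[e] '' s) := by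
  rw [iter_image_eq_preimage]
  exact (T.symm.measurable.iterate e) hs

theorem iter_image_measure (μ : Measure Ω) (hT : MeasurePreserving (⇑T) μ μ) (e : ℕ) {s : Set Ω}
    (hs : MeasurableSet s) : μ ((⇑T)^[e] '' s) = μ s := by
  rw [iter_image_eq_preimage]
  exact ((MeasurePreserving.symm T hT).iterate e).measure_preimage hs.nullMeasurableSet

theorem iter_inj (e : ℕ) : Function.Injective ((⇑T)^[e]) :=
  Function.Injective.iterate (T.injective) e

set_option maxHeartbeats 2000000

/-- **Inequality (3.18).** In the construction of the counter-example of Theorem 2.6,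
if `4 N_l^{-1/p} l N_{l-1} < 1` then
`μ{max_{1≤i<i'≤N_l} |g∘T^{i'} - g∘T^i|/(i'-i)^{1/2-1/p} ≥ N_l^{1/p}/2}
  ≥ 1/2 - K_l/(2N_l) - 2N_l ∑_{l'>l} K_{l'}/N_{l'}`. -/
theorem counterexample_lower_bound {Ω : Type} [MeasurableSpace Ω]
    (μ : Measure Ω) [IsProbabilityMeasure μ] (T : Ω ≃ᵐ Ω)
    (hT : MeasurePreserving (⇑T) μ μ) (p : ℝ) (hp : 2 < p)
    (K N : ℕ → ℕ)
    (hK1 : ∀ m : ℕ, 1 ≤ m → 1 ≤ K m)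
    (hKinc : ∀ m : ℕ, 1 ≤ m → K m < K (m + 1))
    (hNinc : ∀ m : ℕ, 1 ≤ m → N m < N (m + 1))
    (hKN : ∀ m : ℕ, 1 ≤ m → 4 * K m ≤ N m)
    (A : ℕ → Set Ω) (hA : ∀ m, MeasurableSet (A m))
    (hdisj : ∀ m : ℕ, 1 ≤ m → ∀ i j : ℕ, i < N m → j < N m → i ≠ j →
      Disjoint ((⇑T)^[i] '' A m) ((⇑T)^[j] '' A m))
    (hμA : ∀ m : ℕ, 1 ≤ m →
      ENNReal.ofReal (1 / 2 : ℝ) ≤ μ (⋃ i ∈ Finset.range (N m), (⇑T)^[i] '' A m))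
    (h gm : ℕ → Ω → ℝ)
    (hh : ∀ m : ℕ, h m = fun x =>
      ((N m : ℝ) ^ ((1 : ℝ) / p) / (K m : ℝ) ^ ((1 : ℝ) / 2 + 1 / p)) *
        Set.indicator (⋃ j ∈ Finset.Icc 1 (K m), (⇑T)^[N m - j] '' A m) (fun _ => (1 : ℝ)) x)
    (hgm : ∀ m : ℕ, gm m = fun x => ∑ j ∈ Finset.range (K m), h m ((⇑T)^[j] x))
    (g : Ω → ℝ)
    (hg : ∀ᵐ x ∂μ, HasSum (fun m : ℕ => if 1 ≤ m then gm m x else 0) (g x))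
    (l : ℕ) (hl : 2 ≤ l)
    (hsmall : 4 * (N l : ℝ) ^ (-(1 : ℝ) / p) * l * (N (l - 1) : ℝ) < 1)
    (hsum : Summable (fun m : ℕ => if l < m then (K m : ℝ) / (N m : ℝ) else 0)) :
    ENNReal.ofReal
        (1 / 2 - (K l : ℝ) / (2 * N l) -
          2 * (N l : ℝ) * ∑' m : ℕ, if l < m then (K m : ℝ) / (N m : ℝ) else 0) ≤
      μ {ω | ∃ i i' : ℕ, 1 ≤ i ∧ i < i' ∧ i' ≤ N l ∧
        (N l : ℝ) ^ ((1 : ℝ) / p) / 2 ≤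
          |g ((⇑T)^[i'] ω) - g ((⇑T)^[i] ω)| /
            ((i' : ℝ) - (i : ℝ)) ^ ((1 : ℝ) / 2 - 1 / p)} := by
  -- basic numeric facts
  have hl1 : 1 ≤ l := by omega
  have hKl1 : 1 ≤ K l := hK1 l hl1
  have hKNl : 4 * K l ≤ N l := hKN l hl1
  have hp0 : (0 : ℝ) < p := by linarith
  have hexp : (0:ℝ) ≤ 1/2 - 1/p := by
    have h12 : 1/p < 1/2 := one_div_lt_one_div_of_lt (by norm_num) hp
    linarith
  have hN1 : ∀ m : ℕ, 1 ≤ m → 1 ≤ N m := by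
    intro m hm; have := hKN m hm; have := hK1 m hm; omega
  have hNmono : ∀ a b : ℕ, 1 ≤ a → a ≤ b → N a ≤ N b := by
    intro a b ha hab
    induction b, hab using Nat.le_induction with
    | base => exact le_refl _
    | succ n hn ih => exact le_trans ih (le_of_lt (hNinc n (le_trans ha hn)))
  -- sets
  set Vm : ℕ → Set Ω :=
    fun m => ⋃ e ∈ Finset.Icc (N m + 1 - 2 * K m) (N m - 1), (⇑T)^[e] '' A m with hVmdef
  set B : Set Ω :=
    ⋃ m, ⋃ (_ : l < m), ⋃ t ∈ Finset.Icc 1 (N l), (⇑T)^[t] ⁻¹' Vm m with hBdef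
  set Sg : Set Ω := {x | HasSum (fun m : ℕ => if 1 ≤ m then gm m x else 0) (g x)} with hSgdef
  set G3 : Set Ω := ⋂ t ∈ Finset.Icc 1 (N l), (⇑T)^[t] ⁻¹' Sg with hG3def
  set G1 : Set Ω := ⋃ s ∈ Finset.range (N l - K l), (⇑T)^[s] '' A l with hG1def
  -- membership lemma
  have hmem : ∀ (m : ℕ), 1 ≤ m → ∀ x ∈ A m, ∀ a b : ℕ, a < N m → b < N m →
      ((⇑T)^[a] x ∈ (⇑T)^[b] '' A m ↔ a = b) := by
    intro m hm x hx a b ha hb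
    constructor
    · intro hmemab
      by_contra hne
      exact Set.disjoint_left.mp (hdisj m hm a b ha hb hne) ⟨x, hx, rfl⟩ hmemab
    · rintro rfl; exact ⟨x, hx, rfl⟩
  -- nonnegativity of the constant
  have hc_nonneg : ∀ m : ℕ, 0 ≤ (N m:ℝ)^((1:ℝ)/p) / (K m:ℝ)^((1:ℝ)/2 + 1/p) :=
    fun m => div_nonneg (Real.rpow_nonneg (Nat.cast_nonneg _) _)
      (Real.rpow_nonneg (Nat.cast_nonneg _) _)
  have hind_le_one : ∀ (s : Set Ω) (z : Ω),
      Set.indicator s (fun _ => (1:ℝ)) z ≤ 1 := by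
    intro s z
    classical
    rw [Set.indicator_apply]
    split <;> norm_num
  have hgm_nonneg : ∀ (m : ℕ) (y : Ω), 0 ≤ gm m y := by
    intro m y
    rw [hgm m]
    apply Finset.sum_nonneg
    intro j hj
    rw [hh m]
    exact mul_nonneg (hc_nonneg m) (Set.indicator_nonneg (fun _ _ => by norm_num) _)
  have hgm_upper : ∀ (m : ℕ) (y : Ω),
      gm m y ≤ (K m:ℝ) * ((N m:ℝ)^((1:ℝ)/p) / (K m:ℝ)^((1:ℝ)/2 + 1/p)) := by
    intro m y
    rw [hgm m]
    calc ∑ j ∈ Finset.range (K m), h m ((⇑T)^[j] y)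
        ≤ ∑ j ∈ Finset.range (K m), ((N m:ℝ)^((1:ℝ)/p) / (K m:ℝ)^((1:ℝ)/2 + 1/p)) := by
          apply Finset.sum_le_sum
          intro j hj
          rw [hh m]
          calc ((N m:ℝ)^((1:ℝ)/p) / (K m:ℝ)^((1:ℝ)/2 + 1/p)) *
              Set.indicator _ (fun _ => (1:ℝ)) ((⇑T)^[j] y)
              ≤ ((N m:ℝ)^((1:ℝ)/p) / (K m:ℝ)^((1:ℝ)/2 + 1/p)) * 1 :=
                mul_le_mul_of_nonneg_left (hind_le_one _ _) (hc_nonneg m)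
            _ = _ := mul_one _
      _ = (K m:ℝ) * ((N m:ℝ)^((1:ℝ)/p) / (K m:ℝ)^((1:ℝ)/2 + 1/p)) := by
          rw [Finset.sum_const, Finset.card_range, nsmul_eq_mul]
  -- K m * c m = N^{1/p} K^{1/2-1/p}
  have hKc_eq : ∀ m : ℕ, 1 ≤ m →
      (K m:ℝ) * ((N m:ℝ)^((1:ℝ)/p) / (K m:ℝ)^((1:ℝ)/2 + 1/p)) =
        (N m:ℝ)^((1:ℝ)/p) * (K m:ℝ)^((1:ℝ)/2 - 1/p) := by
    intro m hm
    have hK0 : (0:ℝ) < K m := by exact_mod_cast hK1 m hm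
    have e1 : (K m:ℝ)^((1:ℝ)/2 - 1/p) =
        (K m:ℝ) / (K m:ℝ)^((1:ℝ)/2 + 1/p) := by
      rw [show (1:ℝ)/2 - 1/p = 1 - ((1:ℝ)/2 + 1/p) by ring, Real.rpow_sub hK0, Real.rpow_one]
    rw [e1]; ring
  have hKcN : ∀ m : ℕ, 1 ≤ m →
      (K m:ℝ) * ((N m:ℝ)^((1:ℝ)/p) / (K m:ℝ)^((1:ℝ)/2 + 1/p)) ≤ (N m:ℝ) := by
    intro m hm
    rw [hKc_eq m hm]
    have hN0 : (0:ℝ) < N m := by exact_mod_cast hN1 m hm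
    have hKN' : (K m:ℝ) ≤ (N m:ℝ) := by
      have := hKN m hm; exact_mod_cast by omega
    calc (N m:ℝ)^((1:ℝ)/p) * (K m:ℝ)^((1:ℝ)/2 - 1/p)
        ≤ (N m:ℝ)^((1:ℝ)/p) * (N m:ℝ)^((1:ℝ)/2 - 1/p) := by
          apply mul_le_mul_of_nonneg_left _ (Real.rpow_nonneg (le_of_lt hN0) _)
          exact Real.rpow_le_rpow (Nat.cast_nonneg _) hKN' hexp
      _ = (N m:ℝ)^((1:ℝ)/p + ((1:ℝ)/2 - 1/p)) := (Real.rpow_add hN0 _ _).symm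
      _ = (N m:ℝ)^((1:ℝ)/2) := by norm_num
      _ ≤ (N m:ℝ)^((1:ℝ)) := by
          apply Real.rpow_le_rpow_of_exponent_le
          · exact_mod_cast hN1 m hm
          · norm_num
      _ = (N m:ℝ) := Real.rpow_one _
  -- pointwise: the good set is contained in the target set
  have key : ∀ ω, ω ∈ (G1 ∩ Bᶜ) ∩ G3 → ∃ i i' : ℕ, 1 ≤ i ∧ i < i' ∧ i' ≤ N l ∧
      (N l : ℝ) ^ ((1 : ℝ) / p) / 2 ≤
        |g ((⇑T)^[i'] ω) - g ((⇑T)^[i] ω)| /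
          ((i' : ℝ) - (i : ℝ)) ^ ((1 : ℝ) / 2 - 1 / p) := by
    rintro ω ⟨⟨hωG1, hωB⟩, hωG3⟩
    rw [hG1def] at hωG1
    simp only [Set.mem_iUnion] at hωG1
    obtain ⟨s, hs, x, hx, rfl⟩ := hωG1
    rw [Finset.mem_range] at hs
    set i : ℕ := N l - K l - s with hidef
    set i' : ℕ := i + K l with hi'def
    have hiIcc : i ∈ Finset.Icc 1 (N l) := by rw [Finset.mem_Icc]; omega
    have hi'Icc : i' ∈ Finset.Icc 1 (N l) := by rw [Finset.mem_Icc]; omega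
    -- value of gm l at T^[i] ω
    have hTi : (⇑T)^[i] ((⇑T)^[s] x) = (⇑T)^[N l - K l] x := by
      rw [← Function.iterate_add_apply]; congr 1; omega
    have hTi' : (⇑T)^[i'] ((⇑T)^[s] x) = (⇑T)^[N l] x := by
      rw [← Function.iterate_add_apply]; congr 1; omega
    have hgl_i : gm l ((⇑T)^[i] ((⇑T)^[s] x)) =
        (K l:ℝ) * ((N l:ℝ)^((1:ℝ)/p) / (K l:ℝ)^((1:ℝ)/2 + 1/p)) := by
      rw [hTi]
      simp only [hgm]
      have hterm : ∀ j ∈ Finset.range (K l), h l ((⇑T)^[j] ((⇑T)^[N l - K l] x)) =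
          (N l:ℝ)^((1:ℝ)/p) / (K l:ℝ)^((1:ℝ)/2 + 1/p) := by
        intro j hj
        rw [Finset.mem_range] at hj
        rw [← Function.iterate_add_apply]
        simp only [hh l]
        have hmemS : (⇑T)^[j + (N l - K l)] x ∈
            ⋃ j' ∈ Finset.Icc 1 (K l), (⇑T)^[N l - j'] '' A l := by
          apply Set.mem_iUnion₂.mpr
          refine ⟨K l - j, by rw [Finset.mem_Icc]; omega, ?_⟩
          have he : N l - (K l - j) = j + (N l - K l) := by omega
          rw [he]
          exact ⟨x, hx, rfl⟩
        rw [Set.indicator_of_mem hmemS]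
        ring
      rw [Finset.sum_congr rfl hterm, Finset.sum_const, Finset.card_range, nsmul_eq_mul]
    have hgl_i' : gm l ((⇑T)^[i'] ((⇑T)^[s] x)) = 0 := by
      rw [hTi']
      simp only [hgm]
      apply Finset.sum_eq_zero
      intro j hj
      rw [Finset.mem_range] at hj
      rw [← Function.iterate_add_apply]
      simp only [hh l]
      have hnotmem : (⇑T)^[j + N l] x ∉
          ⋃ j' ∈ Finset.Icc 1 (K l), (⇑T)^[N l - j'] '' A l := by
        intro hmm
        obtain ⟨j', hj', hmm2⟩ := Set.mem_iUnion₂.mp hmm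
        rw [Finset.mem_Icc] at hj'
        have hsplit : (⇑T)^[j + N l] x = (⇑T)^[N l - j'] ((⇑T)^[j + j'] x) := by
          rw [← Function.iterate_add_apply]; congr 1; omega
        rw [hsplit] at hmm2
        have hAmem : (⇑T)^[j + j'] x ∈ A l :=
          ((iter_inj T (N l - j')).mem_set_image).mp hmm2
        have h0 : (⇑T)^[j + j'] x ∈ (⇑T)^[0] '' A l := by simpa using hAmem
        have := (hmem l hl1 x hx (j + j') 0 (by omega) (by omega)).mp h0
        omega
      rw [Set.indicator_of_notMem hnotmem]
      ring
    -- tail terms vanish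
    have htail : ∀ t ∈ Finset.Icc 1 (N l), ∀ m : ℕ, l < m →
        gm m ((⇑T)^[t] ((⇑T)^[s] x)) = 0 := by
      intro t ht m hm
      have hm1 : 1 ≤ m := by omega
      have hKm1 := hK1 m hm1
      have hKNm := hKN m hm1
      rw [hgm m]
      apply Finset.sum_eq_zero
      intro j hj
      rw [Finset.mem_range] at hj
      simp only [hh m]
      have hnot : (⇑T)^[j] ((⇑T)^[t] ((⇑T)^[s] x)) ∉
          ⋃ j' ∈ Finset.Icc 1 (K m), (⇑T)^[N m - j'] '' A m := by
        intro hmm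
        obtain ⟨j', hj', hmm2⟩ := Set.mem_iUnion₂.mp hmm
        rw [Finset.mem_Icc] at hj'
        have he2 : N m - j' = j + (N m - j' - j) := by omega
        have hsplit : (⇑T)^[N m - j'] '' A m =
            (⇑T)^[j] '' ((⇑T)^[N m - j' - j] '' A m) := by
          rw [← Set.image_comp, ← Function.iterate_add, ← he2]
        rw [hsplit] at hmm2
        have hVmem : (⇑T)^[t] ((⇑T)^[s] x) ∈ (⇑T)^[N m - j' - j] '' A m :=
          ((iter_inj T j).mem_set_image).mp hmm2
        apply hωB
        rw [hBdef]
        refine Set.mem_iUnion.mpr ⟨m, Set.mem_iUnion.mpr ⟨hm, ?_⟩⟩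
        apply Set.mem_iUnion₂.mpr
        refine ⟨t, ht, ?_⟩
        show (⇑T)^[t] ((⇑T)^[s] x) ∈ Vm m
        rw [hVmdef]
        apply Set.mem_iUnion₂.mpr
        exact ⟨N m - j' - j, by rw [Finset.mem_Icc]; omega, hVmem⟩
      rw [Set.indicator_of_notMem hnot]
      ring
    -- value of g
    have hgval : ∀ t ∈ Finset.Icc 1 (N l), g ((⇑T)^[t] ((⇑T)^[s] x)) =
        ∑ m ∈ Finset.Icc 1 l, gm m ((⇑T)^[t] ((⇑T)^[s] x)) := by
      intro t ht
      have hHS : HasSum (fun m : ℕ => if 1 ≤ m then gm m ((⇑T)^[t] ((⇑T)^[s] x)) else 0)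
          (g ((⇑T)^[t] ((⇑T)^[s] x))) := by
        have hmem3 := Set.mem_iInter₂.mp hωG3 t ht
        exact hmem3
      have hfin : ∀ m ∉ Finset.Icc 1 l,
          (if 1 ≤ m then gm m ((⇑T)^[t] ((⇑T)^[s] x)) else 0) = 0 := by
        intro m hm
        rw [Finset.mem_Icc] at hm
        push_neg at hm
        by_cases h1 : 1 ≤ m
        · rw [if_pos h1]; exact htail t ht m (by omega)
        · rw [if_neg h1]
      have h2 : HasSum _ _ := hasSum_sum_of_ne_finset_zero hfin
      have h3 := hHS.unique h2
      rw [h3]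
      exact Finset.sum_congr rfl (fun m hm => if_pos (Finset.mem_Icc.mp hm).1)
    -- difference
    have hsplitIcc : Finset.Icc 1 l = insert l (Finset.Icc 1 (l-1)) := by
      ext k; simp only [Finset.mem_Icc, Finset.mem_insert]; omega
    have hdiffeq : g ((⇑T)^[i] ((⇑T)^[s] x)) - g ((⇑T)^[i'] ((⇑T)^[s] x)) =
        (∑ m ∈ Finset.Icc 1 (l-1),
          (gm m ((⇑T)^[i] ((⇑T)^[s] x)) - gm m ((⇑T)^[i'] ((⇑T)^[s] x)))) +
        (K l:ℝ) * ((N l:ℝ)^((1:ℝ)/p) / (K l:ℝ)^((1:ℝ)/2 + 1/p)) := by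
      rw [hgval i hiIcc, hgval i' hi'Icc, ← Finset.sum_sub_distrib, hsplitIcc,
        Finset.sum_insert (by simp only [Finset.mem_Icc]; omega), hgl_i, hgl_i']
      ring
    -- bound on the small terms
    have hEbound : |∑ m ∈ Finset.Icc 1 (l-1),
        (gm m ((⇑T)^[i] ((⇑T)^[s] x)) - gm m ((⇑T)^[i'] ((⇑T)^[s] x)))| ≤
        (l:ℝ) * (N (l-1):ℝ) := by
      calc |∑ m ∈ Finset.Icc 1 (l-1),
          (gm m ((⇑T)^[i] ((⇑T)^[s] x)) - gm m ((⇑T)^[i'] ((⇑T)^[s] x)))|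
          ≤ ∑ m ∈ Finset.Icc 1 (l-1),
            |gm m ((⇑T)^[i] ((⇑T)^[s] x)) - gm m ((⇑T)^[i'] ((⇑T)^[s] x))| :=
            Finset.abs_sum_le_sum_abs _ _
        _ ≤ ∑ m ∈ Finset.Icc 1 (l-1), (N (l-1):ℝ) := by
            apply Finset.sum_le_sum
            intro m hm
            rw [Finset.mem_Icc] at hm
            have hb1 := hgm_nonneg m ((⇑T)^[i] ((⇑T)^[s] x))
            have hb2 := hgm_nonneg m ((⇑T)^[i'] ((⇑T)^[s] x))
            have hu1 := hgm_upper m ((⇑T)^[i] ((⇑T)^[s] x))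
            have hu2 := hgm_upper m ((⇑T)^[i'] ((⇑T)^[s] x))
            have hKcNm := hKcN m hm.1
            have hNlm : (N m:ℝ) ≤ (N (l-1):ℝ) := by
              exact_mod_cast hNmono m (l-1) hm.1 hm.2
            rw [abs_sub_le_iff]
            constructor <;> linarith
        _ = ((l-1:ℕ):ℝ) * (N (l-1):ℝ) := by
            rw [Finset.sum_const, Nat.card_Icc, nsmul_eq_mul]
            norm_num
        _ ≤ (l:ℝ) * (N (l-1):ℝ) := by
            apply mul_le_mul_of_nonneg_right _ (Nat.cast_nonneg _)
            exact_mod_cast Nat.sub_le l 1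
    -- numeric facts about M
    have hNl0 : (0:ℝ) < (N l:ℝ) := by exact_mod_cast hN1 l hl1
    have hM0 : (0:ℝ) < (N l:ℝ)^((1:ℝ)/p) := Real.rpow_pos_of_pos hNl0 _
    have hM4 : (l:ℝ) * (N (l-1):ℝ) < (N l:ℝ)^((1:ℝ)/p)/4 := by
      have hrw : (N l:ℝ)^(-(1:ℝ)/p) = ((N l:ℝ)^((1:ℝ)/p))⁻¹ := by
        rw [neg_div, Real.rpow_neg (le_of_lt hNl0)]
      rw [hrw] at hsmall
      have h2 := mul_lt_mul_of_pos_right hsmall hM0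
      rw [one_mul] at h2
      have hMne : ((N l:ℝ)^((1:ℝ)/p)) ≠ 0 := ne_of_gt hM0
      field_simp at h2
      linarith
    -- conclude
    refine ⟨i, i', by omega, by omega, by omega, ?_⟩
    have hcast : ((i':ℕ):ℝ) - ((i:ℕ):ℝ) = (K l:ℝ) := by
      rw [hi'def]; push_cast; ring
    rw [hcast, abs_sub_comm, hdiffeq]
    have hD1 : (1:ℝ) ≤ (K l:ℝ)^((1:ℝ)/2 - 1/p) := by
      calc (1:ℝ) = (1:ℝ) ^ ((1:ℝ)/2-1/p) := (Real.one_rpow _).symm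
        _ ≤ (K l:ℝ)^((1:ℝ)/2 - 1/p) :=
          Real.rpow_le_rpow (by norm_num) (by exact_mod_cast hKl1) hexp
    have hD0 : (0:ℝ) < (K l:ℝ)^((1:ℝ)/2 - 1/p) := by linarith
    rw [le_div_iff₀ hD0, hKc_eq l hl1]
    set E := ∑ m ∈ Finset.Icc 1 (l-1),
      (gm m ((⇑T)^[i] ((⇑T)^[s] x)) - gm m ((⇑T)^[i'] ((⇑T)^[s] x))) with hEdef
    set M := (N l:ℝ)^((1:ℝ)/p) with hMdef
    set D := (K l:ℝ)^((1:ℝ)/2 - 1/p) with hDdef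
    have hE4 : |E| < M/4 := lt_of_le_of_lt hEbound hM4
    have habs2 : M * D - |E| ≤ |E + M * D| := by
      have h6 := abs_sub_abs_le_abs_sub (M * D) (-E)
      rw [abs_neg, sub_neg_eq_add, add_comm (M*D) E] at h6
      have h7 : |M * D| = M * D := abs_of_nonneg (by positivity)
      rw [h7] at h6
      exact h6
    have hMD : M ≤ M * D := by nlinarith [hM0, hD1]
    nlinarith [habs2, hE4, hMD, hM0]
  -- measure computations
  have hNA : ∀ m : ℕ, 1 ≤ m →
      μ (⋃ i ∈ Finset.range (N m), (⇑T)^[i] '' A m) = ((N m : ℕ) : ℝ≥0∞) * μ (A m) := by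
    intro m hm
    have hd : Set.PairwiseDisjoint ↑(Finset.range (N m)) (fun s => (⇑T)^[s] '' A m) := by
      intro a ha b hb hne
      simp only [Finset.coe_range, Set.mem_Iio] at ha hb
      exact hdisj m hm a b ha hb hne
    rw [measure_biUnion_finset hd (fun b _ => iter_image_measurable T b (hA m)),
      Finset.sum_congr rfl (fun e _ => iter_image_measure T μ hT e (hA m)),
      Finset.sum_const, Finset.card_range, nsmul_eq_mul]
  have hupper : ∀ m : ℕ, 1 ≤ m → ((N m : ℕ) : ℝ≥0∞) * μ (A m) ≤ 1 := by
    intro m hm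
    rw [← hNA m hm]
    exact le_trans (measure_mono (Set.subset_univ _)) (le_of_eq measure_univ)
  have hAl_low : ENNReal.ofReal (1/2 : ℝ) ≤ ((N l : ℕ) : ℝ≥0∞) * μ (A l) := by
    rw [← hNA l hl1]; exact hμA l hl1
  have hG1meas : μ G1 = ((N l - K l : ℕ) : ℝ≥0∞) * μ (A l) := by
    have hd : Set.PairwiseDisjoint ↑(Finset.range (N l - K l)) (fun s => (⇑T)^[s] '' A l) := by
      intro a ha b hb hne
      simp only [Finset.coe_range, Set.mem_Iio] at ha hb
      exact hdisj l hl1 a b (by omega) (by omega) hne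
    rw [hG1def, measure_biUnion_finset hd (fun b _ => iter_image_measurable T b (hA l)),
      Finset.sum_congr rfl (fun e _ => iter_image_measure T μ hT e (hA l)),
      Finset.sum_const, Finset.card_range, nsmul_eq_mul]
  have hNlne0 : ((N l : ℕ) : ℝ≥0∞) ≠ 0 := by
    have := hN1 l hl1
    simp only [ne_eq, Nat.cast_eq_zero]
    omega
  have hG1low : ENNReal.ofReal (1/2 - (K l:ℝ)/(2*(N l:ℝ))) ≤ μ G1 := by
    rw [← ENNReal.mul_le_mul_iff_right hNlne0 (ENNReal.natCast_ne_top (N l))]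
    calc ((N l : ℕ) : ℝ≥0∞) * ENNReal.ofReal (1/2 - (K l:ℝ)/(2*(N l:ℝ)))
        = ENNReal.ofReal ((N l:ℝ)) * ENNReal.ofReal (1/2 - (K l:ℝ)/(2*(N l:ℝ))) := by
          rw [ENNReal.ofReal_natCast]
      _ = ENNReal.ofReal ((N l:ℝ) * (1/2 - (K l:ℝ)/(2*(N l:ℝ)))) :=
          (ENNReal.ofReal_mul (Nat.cast_nonneg _)).symm
      _ = ENNReal.ofReal (((N l - K l:ℕ):ℝ) * (1/2)) := by
          congr 1
          have hKlNl' : K l ≤ N l := by omega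
          have hNl0 : (0:ℝ) < (N l:ℝ) := by exact_mod_cast hN1 l hl1
          rw [Nat.cast_sub hKlNl']
          field_simp
      _ = ENNReal.ofReal (((N l - K l:ℕ):ℝ)) * ENNReal.ofReal (1/2) :=
          ENNReal.ofReal_mul (Nat.cast_nonneg _)
      _ = ((N l - K l:ℕ):ℝ≥0∞) * ENNReal.ofReal (1/2) := by rw [ENNReal.ofReal_natCast]
      _ ≤ ((N l - K l:ℕ):ℝ≥0∞) * (((N l : ℕ):ℝ≥0∞) * μ (A l)) := mul_le_mul_right hAl_low _
      _ = ((N l : ℕ):ℝ≥0∞) * (((N l - K l:ℕ):ℝ≥0∞) * μ (A l)) := by ring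
      _ = ((N l : ℕ):ℝ≥0∞) * μ G1 := by rw [hG1meas]
  have hVmeas : ∀ m, MeasurableSet (Vm m) :=
    fun m => Finset.measurableSet_biUnion _ (fun e _ => iter_image_measurable T e (hA m))
  have hVupper : ∀ m : ℕ, 1 ≤ m → μ (Vm m) ≤ ENNReal.ofReal (2*(K m:ℝ)/(N m:ℝ)) := by
    intro m hm
    have hKm1 := hK1 m hm
    have hKNm := hKN m hm
    have hNmne0 : ((N m : ℕ) : ℝ≥0∞) ≠ 0 := by
      have := hN1 m hm
      simp only [ne_eq, Nat.cast_eq_zero]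
      omega
    rw [← ENNReal.mul_le_mul_iff_right hNmne0 (ENNReal.natCast_ne_top (N m))]
    have hVcard : μ (Vm m) ≤ ((2*K m - 1:ℕ):ℝ≥0∞) * μ (A m) := by
      calc μ (Vm m) ≤ ∑ e ∈ Finset.Icc (N m + 1 - 2*K m) (N m - 1), μ ((⇑T)^[e] '' A m) :=
            measure_biUnion_finset_le _ _
        _ = ((2*K m - 1:ℕ):ℝ≥0∞) * μ (A m) := by
            rw [Finset.sum_congr rfl (fun e _ => iter_image_measure T μ hT e (hA m)),
              Finset.sum_const, nsmul_eq_mul, Nat.card_Icc]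
            congr 2
            omega
    calc ((N m:ℕ):ℝ≥0∞) * μ (Vm m)
        ≤ ((N m:ℕ):ℝ≥0∞) * (((2*K m - 1:ℕ):ℝ≥0∞) * μ (A m)) := mul_le_mul_right hVcard _
      _ = ((2*K m - 1:ℕ):ℝ≥0∞) * (((N m:ℕ):ℝ≥0∞) * μ (A m)) := by ring
      _ ≤ ((2*K m - 1:ℕ):ℝ≥0∞) * 1 := mul_le_mul_right (hupper m hm) _
      _ = ((2*K m - 1:ℕ):ℝ≥0∞) := mul_one _
      _ ≤ ENNReal.ofReal (2*(K m:ℝ)) := by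
          rw [← ENNReal.ofReal_natCast]
          apply ENNReal.ofReal_le_ofReal
          rw [Nat.cast_sub (by omega : 1 ≤ 2*K m)]
          push_cast
          linarith
      _ = ((N m:ℕ):ℝ≥0∞) * ENNReal.ofReal (2*(K m:ℝ)/(N m:ℝ)) := by
          rw [← ENNReal.ofReal_natCast (N m), ← ENNReal.ofReal_mul (Nat.cast_nonneg _)]
          congr 1
          have hNm0 : (0:ℝ) < (N m:ℝ) := by exact_mod_cast hN1 m hm
          field_simp
  have hsum2 : Summable (fun m : ℕ => if l < m then 2*(N l:ℝ)*(K m:ℝ)/(N m:ℝ) else 0) := by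
    apply Summable.congr (hsum.mul_left (2*(N l:ℝ)))
    intro m
    by_cases hm : l < m
    · simp only [if_pos hm]; ring
    · simp only [if_neg hm]; ring
  have hBbound : μ B ≤
      ENNReal.ofReal (2*(N l:ℝ) * ∑' m : ℕ, if l < m then (K m:ℝ)/(N m:ℝ) else 0) := by
    have h1 : μ B ≤
        ∑' m : ℕ, μ (⋃ (_ : l < m), ⋃ t ∈ Finset.Icc 1 (N l), (⇑T)^[t] ⁻¹' Vm m) := by
      rw [hBdef]; exact measure_iUnion_le _
    have h2 : ∀ m : ℕ, μ (⋃ (_ : l < m), ⋃ t ∈ Finset.Icc 1 (N l), (⇑T)^[t] ⁻¹' Vm m) ≤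
        ENNReal.ofReal (if l < m then 2*(N l:ℝ)*(K m:ℝ)/(N m:ℝ) else 0) := by
      intro m
      by_cases hm : l < m
      · rw [if_pos hm]
        simp only [hm, Set.iUnion_true]
        calc μ (⋃ t ∈ Finset.Icc 1 (N l), (⇑T)^[t] ⁻¹' Vm m)
            ≤ ∑ t ∈ Finset.Icc 1 (N l), μ ((⇑T)^[t] ⁻¹' Vm m) := measure_biUnion_finset_le _ _
          _ = ∑ t ∈ Finset.Icc 1 (N l), μ (Vm m) :=
              Finset.sum_congr rfl (fun t _ =>
                (hT.iterate t).measure_preimage (hVmeas m).nullMeasurableSet)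
          _ = ((N l:ℕ):ℝ≥0∞) * μ (Vm m) := by
              rw [Finset.sum_const, nsmul_eq_mul, Nat.card_Icc]
              norm_num
          _ ≤ ((N l:ℕ):ℝ≥0∞) * ENNReal.ofReal (2*(K m:ℝ)/(N m:ℝ)) :=
              mul_le_mul_right (hVupper m (by omega)) _
          _ = ENNReal.ofReal (2*(N l:ℝ)*(K m:ℝ)/(N m:ℝ)) := by
              rw [← ENNReal.ofReal_natCast (N l), ← ENNReal.ofReal_mul (Nat.cast_nonneg _)]
              congr 1
              ring
      · simp [hm]
    have h3 : μ B ≤ ∑' m : ℕ, ENNReal.ofReal (if l < m then 2*(N l:ℝ)*(K m:ℝ)/(N m:ℝ) else 0) :=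
      le_trans h1 (ENNReal.tsum_le_tsum h2)
    have h4 : (∑' m : ℕ, ENNReal.ofReal (if l < m then 2*(N l:ℝ)*(K m:ℝ)/(N m:ℝ) else 0)) =
        ENNReal.ofReal (∑' m : ℕ, if l < m then 2*(N l:ℝ)*(K m:ℝ)/(N m:ℝ) else 0) := by
      rw [ENNReal.ofReal_tsum_of_nonneg _ hsum2]
      intro m
      by_cases hm : l < m
      · rw [if_pos hm]; positivity
      · rw [if_neg hm]
    have h5 : (∑' m : ℕ, if l < m then 2*(N l:ℝ)*(K m:ℝ)/(N m:ℝ) else 0) =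
        2*(N l:ℝ) * ∑' m : ℕ, if l < m then (K m:ℝ)/(N m:ℝ) else 0 := by
      rw [← tsum_mul_left]
      apply tsum_congr
      intro m
      by_cases hm : l < m
      · simp only [if_pos hm]; ring
      · simp only [if_neg hm]; ring
    rw [h4, h5] at h3
    exact h3
  have hSgnull : μ Sgᶜ = 0 := by
    have he : Sgᶜ = {x | ¬ HasSum (fun m : ℕ => if 1 ≤ m then gm m x else 0) (g x)} := by
      rw [hSgdef, Set.compl_setOf]
    rw [he]
    exact ae_iff.mp hg
  have hG3null : μ G3ᶜ = 0 := by
    have hsub3 : G3ᶜ ⊆ ⋃ t : ℕ, (⇑T)^[t] ⁻¹' Sgᶜ := by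
      intro y hy
      rw [hG3def] at hy
      simp only [Set.mem_compl_iff, Set.mem_iInter, not_forall] at hy
      obtain ⟨t, ht, hyt⟩ := hy
      exact Set.mem_iUnion.mpr ⟨t, hyt⟩
    exact measure_mono_null hsub3 (measure_iUnion_null (fun t =>
      (hT.iterate t).quasiMeasurePreserving.preimage_null hSgnull))
  have hGood : μ G1 ≤ μ ((G1 ∩ Bᶜ) ∩ G3) + μ B := by
    have hsubs : G1 ⊆ ((G1 ∩ Bᶜ) ∩ G3) ∪ (B ∪ G3ᶜ) := by
      intro y hy
      by_cases h1 : y ∈ B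
      · exact Or.inr (Or.inl h1)
      · by_cases h2 : y ∈ G3
        · exact Or.inl ⟨⟨hy, h1⟩, h2⟩
        · exact Or.inr (Or.inr h2)
    calc μ G1 ≤ μ (((G1 ∩ Bᶜ) ∩ G3) ∪ (B ∪ G3ᶜ)) := measure_mono hsubs
      _ ≤ μ ((G1 ∩ Bᶜ) ∩ G3) + μ (B ∪ G3ᶜ) := measure_union_le _ _
      _ ≤ μ ((G1 ∩ Bᶜ) ∩ G3) + (μ B + μ G3ᶜ) := add_le_add_right (measure_union_le _ _) _
      _ = μ ((G1 ∩ Bᶜ) ∩ G3) + μ B := by rw [hG3null, add_zero]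
  have htargetmono : μ ((G1 ∩ Bᶜ) ∩ G3) ≤
      μ {ω | ∃ i i' : ℕ, 1 ≤ i ∧ i < i' ∧ i' ≤ N l ∧
        (N l : ℝ) ^ ((1 : ℝ) / p) / 2 ≤
          |g ((⇑T)^[i'] ω) - g ((⇑T)^[i] ω)| /
            ((i' : ℝ) - (i : ℝ)) ^ ((1 : ℝ) / 2 - 1 / p)} :=
    measure_mono (fun ω hω => key ω hω)
  have hc2 : (0:ℝ) ≤ 2*(N l:ℝ) * ∑' m : ℕ, if l < m then (K m:ℝ)/(N m:ℝ) else 0 := by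
    apply mul_nonneg (by positivity)
    apply tsum_nonneg
    intro m
    by_cases hm : l < m
    · rw [if_pos hm]; positivity
    · rw [if_neg hm]
  rw [ENNReal.ofReal_sub _ hc2]
  apply tsub_le_iff_right.mpr
  calc ENNReal.ofReal (1/2 - (K l:ℝ)/(2*(N l:ℝ))) ≤ μ G1 := hG1low
    _ ≤ μ ((G1 ∩ Bᶜ) ∩ G3) + μ B := hGood
    _ ≤ μ {ω | ∃ i i' : ℕ, 1 ≤ i ∧ i < i' ∧ i' ≤ N l ∧
        (N l : ℝ) ^ ((1 : ℝ) / p) / 2 ≤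
          |g ((⇑T)^[i'] ω) - g ((⇑T)^[i] ω)| /
            ((i' : ℝ) - (i : ℝ)) ^ ((1 : ℝ) / 2 - 1 / p)} +
        ENNReal.ofReal (2*(N l:ℝ) * ∑' m : ℕ, if l < m then (K m:ℝ)/(N m:ℝ) else 0) :=
      add_le_add htargetmono hBbound


end Stmt15

end
end
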